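/- arXiv:1903.09624 — 6 statements merged into one kernel-verified Lean document; each statement's English description precedes it below -/
import Mathlib

section
/- Let ν be a real number with ν > -1/2 and let z > 0. Then ∫_1^∞ e^{-z·x} (x² - 1)^{ν - 1/2} x dx = (2^ν / √π) · Γ(ν + 1/2) · z^{-ν} · K_{ν+1}(z). -/
/-!
Subordination: after `t = s²`, the Cauchy–Schlömilch substitution `s ↦ s - a / 2s` reduces
`∫₀^∞ e^{-t - a²/4t} t^{-1/2} dt` to half the Gaussian integral, so it equals `√π e^{-a}`.
Inserting this for `√π e^{-zx}` and exchanging the integrals (the integrand is nonnegative), the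
inner integral over `x` becomes a Gamma integral after `u = x² - 1`. What is left is
`Γ(ν + 1/2) / 2 · (4/z²)^{ν+1/2} ∫₀^∞ e^{-t - z²/4t} t^ν dt`, and `t = (z/2) e^s` turns the
exponent into `-z cosh s` and this integral into `2 (z/2)^{ν+1} K_{ν+1}(z)`.
-/

open MeasureTheory Real Set

/-- Modified Bessel function of the second kind. -/
noncomputable def besselK (ν z : ℝ) : ℝ :=
  ∫ t in Ioi (0:ℝ), Real.exp (-z * Real.cosh t) * Real.cosh (ν * t)

section CauchySchlomilch

variable {E : Type*} [NormedAddCommGroup E] [NormedSpace ℝ E] {c : ℝ}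

theorem hasDerivAt_const_div {s : ℝ} (hs : s ≠ 0) :
    HasDerivAt (fun s : ℝ => c / s) (-(c / s ^ 2)) s := by
  simpa [div_eq_mul_inv] using (hasDerivAt_inv hs).const_mul c

theorem hasDerivAt_sub_div {s : ℝ} (hs : s ≠ 0) :
    HasDerivAt (fun s : ℝ => s - c / s) (1 + c / s ^ 2) s :=
  ((hasDerivAt_id s).sub (hasDerivAt_const_div hs)).congr_deriv (by ring)

theorem strictMonoOn_sub_div (hc : 0 < c) : StrictMonoOn (fun s : ℝ => s - c / s) (Ioi 0) :=
  fun _ ha _ _ hab => sub_lt_sub hab (div_lt_div_of_pos_left hc ha hab)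

theorem image_sub_div_Ioi (hc : 0 < c) : (fun s : ℝ => s - c / s) '' Ioi 0 = univ := by
  refine eq_univ_of_forall fun y => ?_
  have hr : √(y ^ 2 + 4 * c) ^ 2 = y ^ 2 + 4 * c := sq_sqrt (by positivity)
  have hpos : 0 < y + √(y ^ 2 + 4 * c) := by
    nlinarith [sqrt_nonneg (y ^ 2 + 4 * c), sq_nonneg (y + √(y ^ 2 + 4 * c))]
  refine ⟨(y + √(y ^ 2 + 4 * c)) / 2, half_pos hpos, ?_⟩
  field_simp
  nlinarith

theorem image_const_div_Ioi (hc : 0 < c) : (fun s : ℝ => c / s) '' Ioi 0 = Ioi 0 :=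
  Subset.antisymm (image_subset_iff.2 fun _ hs => div_pos hc hs)
    fun y hy => ⟨c / y, div_pos hc hy, div_div_cancel₀ hc.ne'⟩

theorem integral_one_add_div_sq_smul_comp_sub_div_Ioi (hc : 0 < c) (f : ℝ → E) :
    ∫ s in Ioi 0, (1 + c / s ^ 2) • f (s - c / s) = ∫ x, f x := by
  symm
  rw [← setIntegral_univ, ← image_sub_div_Ioi hc, integral_image_eq_integral_abs_deriv_smul
    measurableSet_Ioi (fun s hs => (hasDerivAt_sub_div (ne_of_gt hs)).hasDerivWithinAt)
    (strictMonoOn_sub_div hc).injOn]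
  refine setIntegral_congr_fun measurableSet_Ioi fun s _ => ?_
  rw [abs_of_pos (by positivity)]

theorem integrableOn_one_add_div_sq_smul_comp_sub_div_Ioi_iff (hc : 0 < c) (f : ℝ → E) :
    IntegrableOn (fun s => (1 + c / s ^ 2) • f (s - c / s)) (Ioi 0) ↔ Integrable f := by
  rw [← integrableOn_univ, ← image_sub_div_Ioi hc,
    integrableOn_image_iff_integrableOn_abs_deriv_smul measurableSet_Ioi
      (fun s hs => (hasDerivAt_sub_div (ne_of_gt hs)).hasDerivWithinAt)
      (strictMonoOn_sub_div hc).injOn]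
  refine integrableOn_congr_fun (fun s _ => ?_) measurableSet_Ioi
  rw [abs_of_pos (by positivity)]

/-- `s ↦ c / s` maps `s - c / s` to its negative. -/
theorem integral_div_sq_smul_comp_sub_div_Ioi (hc : 0 < c) {f : ℝ → E}
    (heven : ∀ x, f (-x) = f x) :
    ∫ s in Ioi 0, (c / s ^ 2) • f (s - c / s) = ∫ s in Ioi 0, f (s - c / s) := by
  conv_rhs => rw [← image_const_div_Ioi hc, integral_image_eq_integral_abs_deriv_smul
    measurableSet_Ioi (fun s hs => (hasDerivAt_const_div (ne_of_gt hs)).hasDerivWithinAt)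
    (StrictAntiOn.injOn fun _ ha _ _ hab => div_lt_div_of_pos_left hc ha hab)]
  refine setIntegral_congr_fun measurableSet_Ioi fun s (hs : 0 < s) => ?_
  have hneg : c / s - c / (c / s) = -(s - c / s) := by field_simp; ring
  rw [hneg, heven, abs_neg, abs_of_pos (by positivity)]

/-- The Cauchy–Schlömilch transformation. -/
theorem integral_comp_sub_div_Ioi (hc : 0 < c) {f : ℝ → E} (hf : Integrable f)
    (heven : ∀ x, f (-x) = f x) :
    ∫ s in Ioi 0, f (s - c / s) = (2 : ℝ)⁻¹ • ∫ x, f x := by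
  have hweighted := (integrableOn_one_add_div_sq_smul_comp_sub_div_Ioi_iff hc f).2 hf
  -- dividing by the weight `1 + c / s ^ 2 ≥ 1` preserves integrability
  have hint : IntegrableOn (fun s => f (s - c / s)) (Ioi 0) := by
    have hbdd : ∀ s : ℝ, ‖(1 + c / s ^ 2)⁻¹‖ ≤ 1 := fun s => by
      rw [norm_inv, norm_of_nonneg (by positivity)]
      exact inv_le_one_of_one_le₀ (le_add_of_nonneg_right (by positivity))
    have hmeas : Measurable fun s : ℝ => (1 + c / s ^ 2)⁻¹ := by fun_prop
    refine IntegrableOn.congr_fun (hweighted.bdd_smul 1 hmeas.aestronglyMeasurable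
      (.of_forall hbdd)) (fun s (hs : 0 < s) => ?_) measurableSet_Ioi
    exact inv_smul_smul₀ (by positivity) _
  have hint' : IntegrableOn (fun s => (c / s ^ 2) • f (s - c / s)) (Ioi 0) :=
    (hweighted.sub hint).congr_fun (fun s _ => by simp [add_smul]) measurableSet_Ioi
  have hsplit : ∫ s in Ioi 0, (1 + c / s ^ 2) • f (s - c / s)
      = (∫ s in Ioi 0, f (s - c / s)) + ∫ s in Ioi 0, (c / s ^ 2) • f (s - c / s) := by
    simp only [add_smul, one_smul]
    exact integral_add hint hint'
  rw [← integral_one_add_div_sq_smul_comp_sub_div_Ioi hc, hsplit,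
    integral_div_sq_smul_comp_sub_div_Ioi hc heven, ← two_smul ℝ, inv_smul_smul₀ two_ne_zero]

end CauchySchlomilch

theorem integral_exp_neg_sub_div_mul_rpow_neg_half {a : ℝ} (ha : 0 < a) :
    ∫ t in Ioi 0, exp (-t - a ^ 2 / (4 * t)) * t ^ (-1 / 2 : ℝ) = √π * exp (-a) := by
  have hgauss : ∫ s in Ioi 0, exp (-(s - a / 2 / s) ^ 2) = √π / 2 := by
    have hgauss_univ : ∫ x, exp (-x ^ 2) = √π := by simpa using integral_gaussian 1
    rw [integral_comp_sub_div_Ioi (half_pos ha) (f := fun x => exp (-x ^ 2))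
      (by simpa using integrable_exp_neg_mul_sq one_pos) (by simp), smul_eq_mul, hgauss_univ]
    ring
  rw [← integral_comp_rpow_Ioi_of_pos two_pos]
  calc _ = ∫ s in Ioi 0, 2 * exp (-a) * exp (-(s - a / 2 / s) ^ 2) := by
        refine setIntegral_congr_fun measurableSet_Ioi fun s (hs : 0 < s) => ?_
        have hinv : (s ^ (2 : ℝ)) ^ (-1 / 2 : ℝ) = s⁻¹ := by
          rw [← rpow_mul hs.le, ← rpow_neg_one]
          norm_num
        have hexp : -s ^ (2 : ℝ) - a ^ 2 / (4 * s ^ (2 : ℝ)) = -a + -(s - a / 2 / s) ^ 2 := by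
          rw [rpow_two]
          field_simp
          ring
        rw [smul_eq_mul, hinv, hexp, exp_add, show (2 : ℝ) - 1 = 1 by norm_num, rpow_one]
        field_simp
    _ = √π * exp (-a) := by
        rw [integral_const_mul, hgauss]
        ring

theorem integrableOn_exp_neg_sub_div_mul_rpow (b : ℝ) {μ : ℝ} (hμ : -1 < μ) :
    IntegrableOn (fun t => exp (-t - b ^ 2 / (4 * t)) * t ^ μ) (Ioi 0) := by
  refine (GammaIntegral_convergent (by linarith : 0 < μ + 1)).mono' (by fun_prop) ?_
  refine (ae_restrict_iff' measurableSet_Ioi).2 (.of_forall fun t (ht : 0 < t) => ?_)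
  rw [norm_of_nonneg (by positivity), add_sub_cancel_right]
  gcongr
  linarith [show 0 ≤ b ^ 2 / (4 * t) by positivity]

section ExpSubstitution

variable {E : Type*} [NormedAddCommGroup E] [NormedSpace ℝ E] {a : ℝ}

theorem image_mul_exp_univ (ha : 0 < a) : (fun s => a * exp s) '' univ = Ioi 0 := by
  refine Subset.antisymm (image_subset_iff.2 fun s _ => mul_pos ha (exp_pos s))
    fun t (ht : 0 < t) => ⟨log (t / a), trivial, ?_⟩
  simp only [exp_log (div_pos ht ha)]
  field_simp

theorem integral_Ioi_eq_integral_mul_exp (ha : 0 < a) (g : ℝ → E) :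
    ∫ t in Ioi 0, g t = ∫ s, (a * exp s) • g (a * exp s) := by
  rw [← image_mul_exp_univ ha, integral_image_eq_integral_abs_deriv_smul MeasurableSet.univ
    (fun s _ => ((hasDerivAt_exp s).const_mul a).hasDerivWithinAt)
    (fun s _ t _ h => exp_injective (mul_left_cancel₀ ha.ne' h)), setIntegral_univ]
  simp only [abs_of_pos (by positivity : 0 < a * exp _)]

theorem integrableOn_Ioi_iff_integrable_mul_exp (ha : 0 < a) (g : ℝ → E) :
    IntegrableOn g (Ioi 0) ↔ Integrable fun s => (a * exp s) • g (a * exp s) := by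
  rw [← image_mul_exp_univ ha, integrableOn_image_iff_integrableOn_abs_deriv_smul
    MeasurableSet.univ (fun s _ => ((hasDerivAt_exp s).const_mul a).hasDerivWithinAt)
    (fun s _ t _ h => exp_injective (mul_left_cancel₀ ha.ne' h)), integrableOn_univ]
  simp only [abs_of_pos (by positivity : 0 < a * exp _)]

end ExpSubstitution

theorem integral_exp_neg_mul_cosh_mul_exp {μ z : ℝ}
    (hi : Integrable fun s => exp (-z * cosh s) * exp (μ * s)) :
    ∫ s, exp (-z * cosh s) * exp (μ * s) = 2 * besselK μ z := by
  rw [← intervalIntegral.integral_Iic_add_Ioi (b := 0) hi.integrableOn hi.integrableOn,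
    ← neg_zero, ← integral_comp_neg_Ioi, neg_zero,
    ← integral_add hi.comp_neg.integrableOn hi.integrableOn, besselK, ← integral_const_mul]
  refine setIntegral_congr_fun measurableSet_Ioi fun s _ => ?_
  simp only [cosh_neg, cosh_eq (μ * s)]
  ring_nf

theorem integral_exp_neg_sub_div_mul_rpow_eq_besselK {z μ : ℝ} (hz : 0 < z) (hμ : -1 < μ) :
    ∫ t in Ioi 0, exp (-t - z ^ 2 / (4 * t)) * t ^ μ
      = 2 * (z / 2) ^ (μ + 1) * besselK (μ + 1) z := by
  have hsubst : ∀ s, (z / 2 * exp s) • (exp (-(z / 2 * exp s) - z ^ 2 / (4 * (z / 2 * exp s))) *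
      (z / 2 * exp s) ^ μ) = (z / 2) ^ (μ + 1) * (exp (-z * cosh s) * exp ((μ + 1) * s)) := by
    intro s
    have hexp : -(z / 2 * exp s) - z ^ 2 / (4 * (z / 2 * exp s))
        = -z * ((exp s + (exp s)⁻¹) / 2) := by
      field_simp
      ring
    rw [smul_eq_mul, mul_rpow (by positivity) (exp_pos s).le, ← exp_mul, rpow_add (by positivity),
      rpow_one, cosh_eq, exp_neg, hexp, show (μ + 1) * s = s * μ + s by ring, exp_add]
    ring
  have hint := (integrableOn_Ioi_iff_integrable_mul_exp (half_pos hz) _).1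
    (integrableOn_exp_neg_sub_div_mul_rpow z hμ)
  simp only [hsubst] at hint
  have hunit : IsUnit ((z / 2) ^ (μ + 1)) := (rpow_pos_of_pos (half_pos hz) _).ne'.isUnit
  rw [integral_Ioi_eq_integral_mul_exp (half_pos hz), funext hsubst, integral_const_mul,
    integral_exp_neg_mul_cosh_mul_exp ((integrable_const_mul_iff hunit _).1 hint)]
  ring

section SqSubOneSubstitution

variable {E : Type*} [NormedAddCommGroup E] [NormedSpace ℝ E]

theorem image_sq_sub_one_Ioi : (fun x : ℝ => x ^ 2 - 1) '' Ioi 1 = Ioi 0 := by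
  refine Subset.antisymm (image_subset_iff.2 fun x (hx : 1 < x) => ?_)
    fun u (hu : 0 < u) => ⟨√(u + 1), ?_, ?_⟩
  · show 0 < x ^ 2 - 1
    nlinarith
  · show 1 < √(u + 1)
    rw [lt_sqrt zero_le_one]
    linarith
  · simp only [sq_sqrt (by linarith : 0 ≤ u + 1), add_sub_cancel_right]

theorem hasDerivAt_sq_sub_one (x : ℝ) : HasDerivAt (fun x : ℝ => x ^ 2 - 1) (2 * x) x := by
  simpa using (hasDerivAt_pow 2 x).sub_const 1

theorem injOn_sq_sub_one : InjOn (fun x : ℝ => x ^ 2 - 1) (Ioi 1) :=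
  fun x (hx : 1 < x) y (hy : 1 < y) h => by
    simpa [abs_of_pos (by linarith : (0 : ℝ) < x), abs_of_pos (by linarith : (0 : ℝ) < y)]
      using (sq_eq_sq_iff_abs_eq_abs x y).1 (sub_left_inj.1 h)

theorem integral_comp_sq_sub_one_Ioi (g : ℝ → E) :
    ∫ x in Ioi 1, (2 * x) • g (x ^ 2 - 1) = ∫ u in Ioi 0, g u := by
  rw [← image_sq_sub_one_Ioi, integral_image_eq_integral_abs_deriv_smul measurableSet_Ioi
    (fun x _ => (hasDerivAt_sq_sub_one x).hasDerivWithinAt) injOn_sq_sub_one]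
  refine setIntegral_congr_fun measurableSet_Ioi fun x (hx : 1 < x) => ?_
  rw [abs_of_pos (by linarith)]

theorem integrableOn_comp_sq_sub_one_Ioi_iff (g : ℝ → E) :
    IntegrableOn (fun x => (2 * x) • g (x ^ 2 - 1)) (Ioi 1) ↔ IntegrableOn g (Ioi 0) := by
  rw [← image_sq_sub_one_Ioi, integrableOn_image_iff_integrableOn_abs_deriv_smul
    measurableSet_Ioi (fun x _ => (hasDerivAt_sq_sub_one x).hasDerivWithinAt) injOn_sq_sub_one]
  refine integrableOn_congr_fun (fun x (hx : 1 < x) => ?_) measurableSet_Ioi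
  rw [abs_of_pos (by linarith)]

end SqSubOneSubstitution

section GammaIntegralSqSubOne

variable {a r : ℝ}

theorem two_mul_smul_rpow_mul_exp_neg_comp_sq_sub_one (x : ℝ) :
    (2 * x) • (exp (-r) / 2 * ((x ^ 2 - 1) ^ (a - 1) * exp (-(r * (x ^ 2 - 1)))))
      = exp (-(r * x ^ 2)) * (x ^ 2 - 1) ^ (a - 1) * x := by
  rw [smul_eq_mul, show -(r * x ^ 2) = -(r * (x ^ 2 - 1)) + -r by ring, exp_add]
  ring

theorem integrableOn_exp_neg_mul_sq_mul_rpow_sq_sub_one (ha : 0 < a) (hr : 0 < r) :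
    IntegrableOn (fun x => exp (-(r * x ^ 2)) * (x ^ 2 - 1) ^ (a - 1) * x) (Ioi 1) := by
  have hGamma : IntegrableOn (fun u => u ^ (a - 1) * exp (-(r * u))) (Ioi 0) := by
    simpa using integrableOn_rpow_mul_exp_neg_mul_rpow (by linarith : -1 < a - 1) one_pos hr
  simpa only [two_mul_smul_rpow_mul_exp_neg_comp_sq_sub_one] using
    (integrableOn_comp_sq_sub_one_Ioi_iff _).2 (hGamma.const_mul (exp (-r) / 2))

theorem integral_exp_neg_mul_sq_mul_rpow_sq_sub_one (ha : 0 < a) (hr : 0 < r) :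
    ∫ x in Ioi 1, exp (-(r * x ^ 2)) * (x ^ 2 - 1) ^ (a - 1) * x
      = exp (-r) / 2 * (1 / r) ^ a * Gamma a := by
  have h := integral_comp_sq_sub_one_Ioi fun u => exp (-r) / 2 * (u ^ (a - 1) * exp (-(r * u)))
  simp only [two_mul_smul_rpow_mul_exp_neg_comp_sq_sub_one] at h
  rw [h, integral_const_mul, integral_rpow_mul_exp_neg_mul_Ioi ha hr]
  ring

end GammaIntegralSqSubOne

theorem sqrt_pi_mul_integral_exp_neg_mul_mul_rpow_sq_sub_one {a z : ℝ} (ha : 0 < a) (hz : 0 < z) :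
    √π * ∫ x in Ioi 1, exp (-z * x) * (x ^ 2 - 1) ^ (a - 1) * x
      = Gamma a / 2 * (4 / z ^ 2) ^ a *
        ∫ t in Ioi 0, exp (-t - z ^ 2 / (4 * t)) * t ^ (a - 1 / 2) := by
  set C := Gamma a / 2 * (4 / z ^ 2) ^ a
  set F : ℝ → ℝ → ℝ := fun t x =>
    exp (-t - (z * x) ^ 2 / (4 * t)) * t ^ (-1 / 2 : ℝ) * ((x ^ 2 - 1) ^ (a - 1) * x)
  have hF_nonneg : ∀ t ∈ Ioi (0 : ℝ), ∀ x ∈ Ioi (1 : ℝ), 0 ≤ F t x := by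
    intro t (ht : 0 < t) x (hx : 1 < x)
    have : 0 ≤ x ^ 2 - 1 := by nlinarith
    positivity
  have hF_t : ∀ x ∈ Ioi (1 : ℝ),
      ∫ t in Ioi 0, F t x = √π * (exp (-z * x) * (x ^ 2 - 1) ^ (a - 1) * x) := by
    intro x (hx : 1 < x)
    rw [integral_mul_const, integral_exp_neg_sub_div_mul_rpow_neg_half (by positivity), neg_mul]
    ring
  have hF_x : ∀ t, F t = fun x => exp (-t) * t ^ (-1 / 2 : ℝ) *
      (exp (-(z ^ 2 / (4 * t) * x ^ 2)) * (x ^ 2 - 1) ^ (a - 1) * x) := by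
    refine fun t => funext fun x => ?_
    simp only [F]
    rw [show -t - (z * x) ^ 2 / (4 * t) = -t + -(z ^ 2 / (4 * t) * x ^ 2) by ring, exp_add]
    ring
  have hF_x_int : ∀ t ∈ Ioi (0 : ℝ), IntegrableOn (F t) (Ioi 1) := by
    intro t (ht : 0 < t)
    rw [hF_x t]
    exact (integrableOn_exp_neg_mul_sq_mul_rpow_sq_sub_one ha (by positivity)).const_mul _
  have hF_x_eq : ∀ t ∈ Ioi (0 : ℝ),
      ∫ x in Ioi 1, F t x = C * (exp (-t - z ^ 2 / (4 * t)) * t ^ (a - 1 / 2)) := by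
    intro t (ht : 0 < t)
    have hr : 1 / (z ^ 2 / (4 * t)) = 4 / z ^ 2 * t := by field_simp
    rw [hF_x t, integral_const_mul,
      integral_exp_neg_mul_sq_mul_rpow_sq_sub_one ha (by positivity), hr,
      mul_rpow (by positivity) ht.le, sub_eq_add_neg (-t), exp_add,
      show a - 1 / 2 = -1 / 2 + a by ring, rpow_add ht]
    ring
  -- Tonelli: `F ≥ 0`, and its iterated integral in the order `x`, then `t`, is finite
  have hF_int : Integrable (Function.uncurry F)
      ((volume.restrict (Ioi 0)).prod (volume.restrict (Ioi 1))) := by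
    rw [integrable_prod_iff (by fun_prop)]
    refine ⟨(ae_restrict_iff' measurableSet_Ioi).2 (.of_forall hF_x_int), ?_⟩
    refine IntegrableOn.congr_fun ((integrableOn_exp_neg_sub_div_mul_rpow z
      (by linarith : -1 < a - 1 / 2)).const_mul C) (fun t ht => ?_) measurableSet_Ioi
    rw [← hF_x_eq t ht]
    exact setIntegral_congr_fun measurableSet_Ioi fun x hx =>
      (norm_of_nonneg (hF_nonneg t ht x hx)).symm
  calc √π * ∫ x in Ioi 1, exp (-z * x) * (x ^ 2 - 1) ^ (a - 1) * x
      = ∫ x in Ioi 1, ∫ t in Ioi 0, F t x := by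
        rw [← integral_const_mul]
        exact setIntegral_congr_fun measurableSet_Ioi fun x hx => (hF_t x hx).symm
    _ = ∫ t in Ioi 0, ∫ x in Ioi 1, F t x := (integral_integral_swap hF_int).symm
    _ = C * ∫ t in Ioi 0, exp (-t - z ^ 2 / (4 * t)) * t ^ (a - 1 / 2) := by
        rw [← integral_const_mul]
        exact setIntegral_congr_fun measurableSet_Ioi hF_x_eq

theorem stmt0 (ν z : ℝ) (hν : ν > -1/2) (hz : z > 0) :
    ∫ x in Ioi (1:ℝ), Real.exp (-z * x) * (x ^ 2 - 1) ^ (ν - 1/2) * x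
      = 2 ^ ν / Real.sqrt π * Real.Gamma (ν + 1/2) * z ^ (-ν) * besselK (ν + 1) z := by
  have key := sqrt_pi_mul_integral_exp_neg_mul_mul_rpow_sq_sub_one (by linarith : 0 < ν + 1 / 2) hz
  rw [show ν + 1 / 2 - 1 = ν - 1 / 2 by ring, show ν + 1 / 2 - 1 / 2 = ν by ring,
    integral_exp_neg_sub_div_mul_rpow_eq_besselK hz (by linarith)] at key
  have hpow : (4 / z ^ 2) ^ (ν + 1 / 2) * (z / 2) ^ (ν + 1) = 2 ^ ν * z ^ (-ν) := by
    have h2z : 0 < 2 / z := by positivity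
    rw [show 4 / z ^ 2 = (2 / z) ^ (2 : ℝ) by rw [rpow_two]; ring, ← rpow_mul h2z.le,
      show z / 2 = (2 / z)⁻¹ by field_simp, inv_rpow h2z.le, ← rpow_neg h2z.le, ← rpow_add h2z,
      show 2 * (ν + 1 / 2) + -(ν + 1) = ν by ring, div_rpow zero_le_two hz.le, rpow_neg hz.le,
      div_eq_mul_inv]
  have hπ : 0 < √π := sqrt_pos.2 pi_pos
  rw [← mul_right_inj' hπ.ne', key]
  calc _ = Gamma (ν + 1 / 2) * ((4 / z ^ 2) ^ (ν + 1 / 2) * (z / 2) ^ (ν + 1)) *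
        besselK (ν + 1) z := by ring
    _ = _ := by
        rw [hpow]
        field_simp
end

section
/- Let ν be a real number with ν > -1 and let μ < 0. Then ∫_0^∞ log(1 + e^{-√(x²+μ²)}) x^ν dx = |μ|^{ν/2+1} · 2^{ν/2} · (1/√π) · Γ((ν+1)/2) · Σ_{n=1}^∞ (-1)^{n+1} n^{-(ν/2+1)} K_{ν/2+1}(n·|μ|). -/
open MeasureTheory Real Set Filter Topology

set_option maxHeartbeats 1000000

lemma besselK_def (ν z : ℝ) : besselK ν z
    = ∫ t in Ioi (0:ℝ), Real.exp (-z * Real.cosh t) * Real.cosh (ν * t) := rfl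


lemma sq_div_eight_le_cosh (u : ℝ) : u ^ 2 / 8 ≤ Real.cosh u := by
  have h1 : Real.exp |u| / 2 ≤ Real.cosh u := by
    rw [← Real.cosh_abs]
    rw [Real.cosh_eq]
    have := Real.exp_pos (-|u|)
    linarith
  have h2 : (1 + |u| / 2) ^ 2 ≤ Real.exp |u| := by
    have := Real.add_one_le_exp (|u| / 2)
    have h3 : Real.exp (|u|/2) ^ 2 = Real.exp |u| := by
      rw [sq, ← Real.exp_add]; congr 1; ring
    calc (1 + |u| / 2) ^ 2 ≤ Real.exp (|u|/2) ^ 2 := by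
          apply pow_le_pow_left₀ (by positivity) (by linarith)
    _ = Real.exp |u| := h3
  have h4 : u ^ 2 / 4 ≤ (1 + |u|/2) ^ 2 := by
    have : u ^ 2 = |u| ^ 2 := (sq_abs u).symm
    nlinarith [abs_nonneg u]
  linarith

lemma integrable_exp_lin_sub_cosh {z : ℝ} (hz : 0 < z) (l : ℝ) :
    Integrable (fun u : ℝ => Real.exp (l * u - z * Real.cosh u)) := by
  have hc : Continuous (fun u : ℝ => Real.exp (l * u - z * Real.cosh u)) := by
    continuity
  set c : ℝ := z / 8 with hc'
  have hcpos : 0 < c := by positivity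
  have key : Integrable (fun u : ℝ => Real.exp (l ^ 2 / (4 * c)) * Real.exp (-c * (u - l / (2 * c)) ^ 2)) := by
    exact ((integrable_exp_neg_mul_sq hcpos).comp_sub_right (l / (2 * c))).const_mul _
  refine key.mono' hc.aestronglyMeasurable (Filter.Eventually.of_forall fun u => ?_)
  rw [Real.norm_eq_abs, abs_of_nonneg (Real.exp_pos _).le, ← Real.exp_add, Real.exp_le_exp]
  have h8 : z * (u ^ 2 / 8) ≤ z * Real.cosh u :=
    mul_le_mul_of_nonneg_left (sq_div_eight_le_cosh u) hz.le
  have heq : l ^ 2 / (4 * c) + -c * (u - l / (2 * c)) ^ 2 = l * u - z * (u ^ 2 / 8) := by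
    rw [hc']; field_simp; ring
  linarith

lemma besselK_integrand_eq (ν z : ℝ) (t : ℝ) :
    Real.exp (-z * Real.cosh t) * Real.cosh (ν * t)
      = (Real.exp (ν * t - z * Real.cosh t) + Real.exp (-ν * t - z * Real.cosh t)) / 2 := by
  rw [Real.cosh_eq (ν * t), sub_eq_add_neg (ν * t), sub_eq_add_neg (-ν * t), Real.exp_add,
    Real.exp_add, neg_mul]
  ring

lemma besselK_integrableOn {z : ℝ} (hz : 0 < z) (ν : ℝ) :
    IntegrableOn (fun t => Real.exp (-z * Real.cosh t) * Real.cosh (ν * t)) (Ioi (0:ℝ)) := by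
  have : IntegrableOn (fun t => (Real.exp (ν * t - z * Real.cosh t)
      + Real.exp (-ν * t - z * Real.cosh t)) / 2) (Ioi (0:ℝ)) :=
    (((integrable_exp_lin_sub_cosh hz ν).add (integrable_exp_lin_sub_cosh hz (-ν))).div_const 2).integrableOn
  exact this.congr_fun (fun t _ => (besselK_integrand_eq ν z t).symm) measurableSet_Ioi

lemma besselK_nonneg {z : ℝ} (hz : 0 < z) (ν : ℝ) : 0 ≤ besselK ν z := by
  rw [besselK_def]
  apply integral_nonneg
  intro t
  have := Real.cosh_pos (x := ν * t)
  positivity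

lemma besselK_neg (ν z : ℝ) : besselK (-ν) z = besselK ν z := by
  rw [besselK_def, besselK_def]
  simp [neg_mul, Real.cosh_neg]

/-- symmetrized representation -/
lemma besselK_eq_real_line {z : ℝ} (hz : 0 < z) (ν : ℝ) :
    besselK ν z = (1/2) * ∫ u : ℝ, Real.exp (ν * u - z * Real.cosh u) := by
  have hint : Integrable (fun u : ℝ => Real.exp (ν * u - z * Real.cosh u)) :=
    integrable_exp_lin_sub_cosh hz ν
  have hsplit : ∫ u : ℝ, Real.exp (ν * u - z * Real.cosh u)
      = (∫ u in Iic (0:ℝ), Real.exp (ν * u - z * Real.cosh u))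
        + ∫ u in Ioi (0:ℝ), Real.exp (ν * u - z * Real.cosh u) :=
    by rw [← MeasureTheory.integral_add_compl (measurableSet_Iic (a := (0:ℝ))) hint, compl_Iic]
  have hneg : (∫ u in Iic (0:ℝ), Real.exp (ν * u - z * Real.cosh u))
      = ∫ u in Ioi (0:ℝ), Real.exp (-ν * u - z * Real.cosh u) := by
    rw [show (Ioi (0:ℝ)) = Ioi (-(0:ℝ)) by norm_num,
      ← integral_comp_neg_Iic (0:ℝ) (fun u => Real.exp (-ν * u - z * Real.cosh u))]
    apply setIntegral_congr_fun measurableSet_Iic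
    intro u _
    simp [Real.cosh_neg, neg_mul, mul_neg]
  rw [besselK_def]
  rw [setIntegral_congr_fun measurableSet_Ioi (fun t _ => besselK_integrand_eq ν z t)]
  rw [integral_div, integral_add (integrable_exp_lin_sub_cosh hz ν).integrableOn
    (integrable_exp_lin_sub_cosh hz (-ν)).integrableOn]
  rw [hsplit, hneg]
  ring

/-- integral representation: ∫ t^(λ-1) e^(-t - z²/(4t)) dt = 2 (z/2)^λ K_λ(z) -/
lemma besselK_intRep {z : ℝ} (hz : 0 < z) (l : ℝ) :
    ∫ t in Ioi (0:ℝ), t ^ (l - 1) * Real.exp (-t - z^2 / (4*t))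
      = 2 * (z/2) ^ l * besselK l z := by
  have hz2 : 0 < z / 2 := by linarith
  set f : ℝ → ℝ := fun u => (z/2) * Real.exp u with hf
  have himg : f '' univ = Ioi (0:ℝ) := by
    ext t; simp only [image_univ, mem_range, mem_Ioi, hf]
    constructor
    · rintro ⟨u, rfl⟩; positivity
    · intro ht; exact ⟨Real.log (t / (z/2)), by
        rw [Real.exp_log (by positivity)]; field_simp⟩
  have hderiv : ∀ u ∈ (univ : Set ℝ), HasDerivWithinAt f ((z/2) * Real.exp u) univ u :=
    fun u _ => ((Real.hasDerivAt_exp u).const_mul (z/2)).hasDerivWithinAt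
  have hinj : InjOn f univ := fun a _ b _ h => by
    exact Real.exp_injective (mul_left_cancel₀ hz2.ne' h)
  have := integral_image_eq_integral_abs_deriv_smul MeasurableSet.univ hderiv hinj
    (fun t => t ^ (l - 1) * Real.exp (-t - z^2 / (4*t)))
  rw [himg] at this
  rw [this, Measure.restrict_univ]
  have hcongr : ∀ u : ℝ, |(z/2) * Real.exp u| • (f u ^ (l - 1) * Real.exp (-(f u) - z^2/(4 * f u)))
      = (z/2) ^ l * Real.exp (l * u - z * Real.cosh u) := by
    intro u
    have hfu : (0:ℝ) < f u := by rw [hf]; positivity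
    have habs : |(z/2) * Real.exp u| = (z/2) * Real.exp u := abs_of_pos (by positivity)
    rw [smul_eq_mul, habs]
    have hpow : f u ^ (l - 1) = (z/2) ^ (l-1) * Real.exp ((l-1) * u) := by
      rw [hf]
      rw [Real.mul_rpow hz2.le (Real.exp_pos u).le, ← Real.exp_mul]
      ring_nf
    have harg : -(f u) - z^2/(4 * f u) = -z * Real.cosh u := by
      rw [hf, Real.cosh_eq]
      have : z^2 / (4 * ((z/2) * Real.exp u)) = (z/2) * Real.exp (-u) := by
        rw [Real.exp_neg]
        field_simp
        ring
      rw [this]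
      ring
    rw [hpow, harg]
    rw [show (z/2) ^ l = (z/2) ^ (l - 1 + 1) by ring_nf, Real.rpow_add hz2, Real.rpow_one]
    rw [show l * u - z * Real.cosh u = u + ((l-1) * u + (-z * Real.cosh u)) by ring,
      Real.exp_add, Real.exp_add]
    ring
  calc ∫ u, |(z/2) * Real.exp u| • ((f u) ^ (l - 1) * Real.exp (-(f u) - z^2/(4 * f u)))
      = ∫ u, (z/2) ^ l * Real.exp (l * u - z * Real.cosh u) := by
        congr 1; funext u; exact hcongr u
    _ = (z/2) ^ l * ∫ u, Real.exp (l * u - z * Real.cosh u) := integral_const_mul _ _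
    _ = 2 * (z/2) ^ l * besselK l z := by rw [besselK_eq_real_line hz l]; ring

lemma besselK_half {z : ℝ} (hz : 0 < z) :
    besselK (1/2) z = Real.sqrt (π / (2*z)) * Real.exp (-z) := by
  rw [besselK_def]
  set f : ℝ → ℝ := fun t => Real.sinh (t/2) with hf
  have himg : f '' Ioi 0 = Ioi (0:ℝ) := by
    ext u; simp only [mem_image, mem_Ioi, hf]
    constructor
    · rintro ⟨t, ht, rfl⟩; exact Real.sinh_pos_iff.mpr (by linarith)
    · intro hu
      refine ⟨2 * Real.arsinh u, by simpa using Real.arsinh_pos_iff.mpr hu, ?_⟩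
      rw [show 2 * Real.arsinh u / 2 = Real.arsinh u by ring, Real.sinh_arsinh]
  have hderiv : ∀ t ∈ Ioi (0:ℝ), HasDerivWithinAt f (Real.cosh (t/2) * (1/2)) (Ioi 0) t := by
    intro t _
    exact ((Real.hasDerivAt_sinh (t/2)).comp t ((hasDerivAt_id t).div_const 2)).hasDerivWithinAt
  have hinj : InjOn f (Ioi 0) := by
    intro a _ b _ h
    have := Real.sinh_injective h
    linarith
  have key := integral_image_eq_integral_abs_deriv_smul measurableSet_Ioi hderiv hinj
    (fun u => 2 * Real.exp (-z * (2 * u^2 + 1)))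
  rw [himg] at key
  have hcongr : ∀ t ∈ Ioi (0:ℝ), |Real.cosh (t/2) * (1/2)| • (2 * Real.exp (-z * (2 * (f t)^2 + 1)))
      = Real.exp (-z * Real.cosh t) * Real.cosh (1/2 * t) := by
    intro t _
    have hch : Real.cosh t = 2 * Real.sinh (t/2) ^ 2 + 1 := by
      have h1 := Real.cosh_two_mul (t/2)
      have h2 := Real.cosh_sq (t/2)
      have h3 : (2:ℝ) * (t/2) = t := by ring
      rw [h3] at h1
      linarith
    rw [smul_eq_mul, abs_of_pos (by positivity : (0:ℝ) < Real.cosh (t/2) * (1/2)), hf]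
    rw [← hch, show (1:ℝ)/2 * t = t/2 by ring]
    ring
  rw [setIntegral_congr_fun measurableSet_Ioi hcongr] at key
  rw [← key, integral_const_mul]
  have hg : ∀ u : ℝ, Real.exp (-z * (2*u^2+1)) = Real.exp (-z) * Real.exp (-(2*z) * u^2) := by
    intro u; rw [← Real.exp_add]; ring_nf
  simp_rw [hg]
  rw [integral_const_mul, integral_gaussian_Ioi]
  rw [show π / (2*z) = π / (2*z) from rfl]
  ring

lemma subordination {c : ℝ} (hc : 0 < c) :
    ∫ s in Ioi (0:ℝ), s ^ (-(1:ℝ)/2) * Real.exp (-s - c^2 / (4*s))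
      = Real.sqrt π * Real.exp (-c) := by
  have h := besselK_intRep hc (1/2 : ℝ)
  rw [show (1:ℝ)/2 - 1 = -(1:ℝ)/2 by norm_num] at h
  rw [h, besselK_half hc]
  rw [Real.sqrt_eq_rpow (π / (2*c))] at *
  have h1 : ((c:ℝ)/2) ^ ((1:ℝ)/2) * (π / (2*c)) ^ ((1:ℝ)/2) = (c/2 * (π / (2*c))) ^ ((1:ℝ)/2) :=
    (Real.mul_rpow (by positivity) (by positivity)).symm
  have h2 : c/2 * (π / (2*c)) = π / 4 := by field_simp; ring
  have h3 : ((π:ℝ)/4) ^ ((1:ℝ)/2) = Real.sqrt π / 2 := by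
    rw [show (π:ℝ)/4 = π * (1/4) by ring, Real.mul_rpow pi_pos.le (by norm_num),
      ← Real.sqrt_eq_rpow, ← Real.sqrt_eq_rpow, show (1:ℝ)/4 = (1/2)^2 by norm_num,
      Real.sqrt_sq (by norm_num)]
    ring
  calc 2 * (c/2) ^ ((1:ℝ)/2) * ((π / (2*c)) ^ ((1:ℝ)/2) * Real.exp (-c))
      = 2 * ((c/2) ^ ((1:ℝ)/2) * (π / (2*c)) ^ ((1:ℝ)/2)) * Real.exp (-c) := by ring
    _ = Real.sqrt π * Real.exp (-c) := by rw [h1, h2, h3]; ring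

lemma inner_gauss {k ν : ℝ} (hk : 0 < k) (hν : -1 < ν) :
    ∫ x in Ioi (0:ℝ), x ^ ν * Real.exp (-k * x^2)
      = k ^ (-(ν+1)/2) * ((1:ℝ)/2) * Real.Gamma ((ν+1)/2) := by
  have h := integral_rpow_mul_exp_neg_mul_rpow (p := 2) (q := ν) (b := k) two_pos hν hk
  have hcong : ∀ x ∈ Ioi (0:ℝ), x ^ ν * Real.exp (-k * x ^ (2:ℝ))
      = x ^ ν * Real.exp (-k * x^2) := by
    intro x hx
    rw [show x ^ (2:ℝ) = x ^ (2:ℕ) from Real.rpow_natCast x 2]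
  rw [setIntegral_congr_fun measurableSet_Ioi hcong] at h
  rw [h]

lemma const_algebra {a b ν : ℝ} (ha : 0 < a) (hb : 0 < b) :
    (a^2/4) ^ (-(ν+1)/2) * ((1:ℝ)/2) * (2 * ((a*b)/2) ^ (ν/2+1))
      = 2 ^ (ν/2) * b ^ (ν/2+1) * a ^ (-(ν/2)) := by
  have e1 : (a^2/4 : ℝ) ^ (-(ν+1)/2)
      = Real.exp ((2*Real.log a - 2*Real.log 2) * (-(ν+1)/2)) := by
    rw [Real.rpow_def_of_pos (by positivity)]
    congr 1
    rw [show a^2/4 = a^2/2^2 by norm_num,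
      Real.log_div (by positivity) (by positivity), Real.log_pow, Real.log_pow]
    push_cast; ring
  have e2 : ((a*b)/2 : ℝ) ^ (ν/2+1)
      = Real.exp ((Real.log a + Real.log b - Real.log 2) * (ν/2+1)) := by
    rw [Real.rpow_def_of_pos (by positivity)]
    congr 1
    rw [Real.log_div (by positivity) (by norm_num), Real.log_mul ha.ne' hb.ne']
  have e3 : (2:ℝ) ^ (ν/2) = Real.exp (Real.log 2 * (ν/2)) := by
    rw [Real.rpow_def_of_pos (by norm_num)]
  have e4 : (b:ℝ) ^ (ν/2+1) = Real.exp (Real.log b * (ν/2+1)) := by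
    rw [Real.rpow_def_of_pos hb]
  have e5 : (a:ℝ) ^ (-(ν/2)) = Real.exp (Real.log a * (-(ν/2))) := by
    rw [Real.rpow_def_of_pos ha]
  rw [e1, e2, e3, e4, e5]
  rw [show ∀ A B : ℝ, Real.exp A * (1/2) * (2 * Real.exp B) = Real.exp (A + B) from
    fun A B => by rw [Real.exp_add]; ring]
  rw [← Real.exp_add, ← Real.exp_add]
  congr 1
  ring

lemma key_integral {a b ν : ℝ} (ha : 0 < a) (hb : 0 < b) (hν : -1 < ν) :
    ∫ x in Ioi (0:ℝ), Real.exp (-(a * Real.sqrt (x^2 + b^2))) * x ^ ν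
      = (Real.sqrt π)⁻¹ * Real.Gamma ((ν+1)/2) * (2 ^ (ν/2) * b ^ (ν/2+1) * a ^ (-(ν/2)))
        * besselK (ν/2+1) (a*b) := by
  set F : ℝ → ℝ → ℝ := fun s x =>
    (s ^ (-(1:ℝ)/2) * Real.exp (-s - (a*b)^2/(4*s))) * (x ^ ν * Real.exp (-(a^2/(4*s)) * x^2))
    with hF
  have hπ : (0:ℝ) < Real.sqrt π := Real.sqrt_pos.mpr pi_pos
  have hΓ : (0:ℝ) < Real.Gamma ((ν+1)/2) := Real.Gamma_pos_of_pos (by linarith)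
  -- Step A: pointwise subordination
  have hFx : ∀ x ∈ Ioi (0:ℝ), Real.exp (-(a * Real.sqrt (x^2 + b^2))) * x ^ ν
      = (Real.sqrt π)⁻¹ * ∫ s in Ioi (0:ℝ), F s x := by
    intro x hx
    rw [mem_Ioi] at hx
    set c : ℝ := a * Real.sqrt (x^2 + b^2) with hc
    have hcpos : 0 < c := by
      have : 0 < Real.sqrt (x^2+b^2) := Real.sqrt_pos.mpr (by positivity)
      positivity
    have hc2 : c^2 = a^2*b^2 + a^2*x^2 := by
      rw [hc, mul_pow, Real.sq_sqrt (by positivity)]; ring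
    have hcong : ∀ s ∈ Ioi (0:ℝ), F s x
        = (s ^ (-(1:ℝ)/2) * Real.exp (-s - c^2/(4*s))) * x ^ ν := by
      intro s hs
      rw [mem_Ioi] at hs
      have harg : -s - c^2/(4*s) = (-s - (a*b)^2/(4*s)) + (-(a^2/(4*s)) * x^2) := by
        rw [hc2]
        field_simp
        ring
      rw [hF, harg, Real.exp_add]
      ring
    rw [setIntegral_congr_fun measurableSet_Ioi hcong]
    have : ∫ s in Ioi (0:ℝ), (s ^ (-(1:ℝ)/2) * Real.exp (-s - c^2/(4*s))) * x ^ ν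
        = (∫ s in Ioi (0:ℝ), s ^ (-(1:ℝ)/2) * Real.exp (-s - c^2/(4*s))) * x ^ ν :=
      integral_mul_const _ _
    rw [this, subordination hcpos]
    field_simp
  -- inner x integral formula
  have hxint : ∀ s ∈ Ioi (0:ℝ), ∫ x in Ioi (0:ℝ), F s x
      = (s ^ (-(1:ℝ)/2) * Real.exp (-s - (a*b)^2/(4*s)))
        * ((a^2/(4*s)) ^ (-(ν+1)/2) * ((1:ℝ)/2) * Real.Gamma ((ν+1)/2)) := by
    intro s hs
    rw [mem_Ioi] at hs
    rw [hF, integral_const_mul, inner_gauss (by positivity) hν]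
  -- split identity for the s-integrand
  have hsplit : ∀ s : ℝ, 0 < s →
      (s ^ (-(1:ℝ)/2) * Real.exp (-s - (a*b)^2/(4*s)))
        * ((a^2/(4*s)) ^ (-(ν+1)/2) * ((1:ℝ)/2) * Real.Gamma ((ν+1)/2))
      = ((a^2/4) ^ (-(ν+1)/2) * ((1:ℝ)/2) * Real.Gamma ((ν+1)/2))
        * (s ^ (ν/2) * Real.exp (-s - (a*b)^2/(4*s))) := by
    intro s hs
    have h1 : (a^2/(4*s)) ^ (-(ν+1)/2) = (a^2/4) ^ (-(ν+1)/2) * s ^ ((ν+1)/2) := by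
      rw [show a^2/(4*s) = (a^2/4) / s by ring,
        Real.div_rpow (by positivity) hs.le,
        show -(ν+1)/2 = -((ν+1)/2) by ring,
        Real.rpow_neg hs.le ((ν+1)/2), division_def, inv_inv]
    have h2 : s ^ (-(1:ℝ)/2) * s ^ ((ν+1)/2) = s ^ (ν/2) := by
      rw [← Real.rpow_add hs, show (-(1:ℝ)/2 + (ν+1)/2) = ν/2 by ring]
    rw [h1, ← h2]
    ring
  set C2 : ℝ := (a^2/4) ^ (-(ν+1)/2) * ((1:ℝ)/2) * Real.Gamma ((ν+1)/2) with hC2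
  have hC2pos : 0 < C2 := by
    rw [hC2]; positivity
  -- the function G of s, and its integrability
  set G : ℝ → ℝ := fun s => (s ^ (-(1:ℝ)/2) * Real.exp (-s - (a*b)^2/(4*s)))
      * ((a^2/(4*s)) ^ (-(ν+1)/2) * ((1:ℝ)/2) * Real.Gamma ((ν+1)/2)) with hG
  have hGmeas : AEStronglyMeasurable G (volume.restrict (Ioi 0)) := by
    rw [hG]
    apply Measurable.aestronglyMeasurable
    fun_prop
  have hGint : IntegrableOn G (Ioi 0) := by
    have hbase : IntegrableOn (fun s : ℝ => C2 * (Real.exp (-s) * s ^ (ν/2))) (Ioi 0) := by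
      have h := Real.GammaIntegral_convergent (s := ν/2 + 1) (by linarith)
      simp only [show ν/2 + 1 - 1 = ν/2 by ring] at h
      exact h.const_mul C2
    apply Integrable.mono' hbase hGmeas
    filter_upwards [ae_restrict_mem measurableSet_Ioi] with s hs
    rw [mem_Ioi] at hs
    rw [hG]
    simp only
    rw [hsplit s hs]
    have hnn0 : (0:ℝ) ≤ s ^ (ν/2) * Real.exp (-s - (a*b)^2/(4*s)) :=
      mul_nonneg (Real.rpow_nonneg hs.le _) (Real.exp_pos _).le
    rw [Real.norm_eq_abs, abs_of_nonneg (mul_nonneg hC2pos.le hnn0)]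
    have hexp : Real.exp (-s - (a*b)^2/(4*s)) ≤ Real.exp (-s) := by
      apply Real.exp_le_exp.mpr
      have : 0 ≤ (a*b)^2/(4*s) := by positivity
      linarith
    have hs' : (0:ℝ) ≤ s ^ (ν/2) := Real.rpow_nonneg hs.le _
    calc C2 * (s ^ (ν/2) * Real.exp (-s - (a*b)^2/(4*s)))
        ≤ C2 * (s ^ (ν/2) * Real.exp (-s)) := by
          apply mul_le_mul_of_nonneg_left _ hC2pos.le
          exact mul_le_mul_of_nonneg_left hexp hs'
      _ = C2 * (Real.exp (-s) * s ^ (ν/2)) := by ring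
  -- product integrability
  have hInt : Integrable (Function.uncurry F)
      ((volume.restrict (Ioi 0)).prod (volume.restrict (Ioi 0))) := by
    have hmeas : AEStronglyMeasurable (Function.uncurry F)
        ((volume.restrict (Ioi 0)).prod (volume.restrict (Ioi 0))) := by
      apply Measurable.aestronglyMeasurable
      rw [hF]
      fun_prop
    rw [MeasureTheory.integrable_prod_iff hmeas]
    constructor
    · filter_upwards [ae_restrict_mem measurableSet_Ioi] with s hs
      rw [mem_Ioi] at hs
      have hk : (0:ℝ) < a^2/(4*s) := by positivity
      have := (integrableOn_rpow_mul_exp_neg_mul_sq hk hν).const_mul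
        (s ^ (-(1:ℝ)/2) * Real.exp (-s - (a*b)^2/(4*s)))
      exact this
    · have hae : (fun s => ∫ x, ‖Function.uncurry F (s, x)‖ ∂(volume.restrict (Ioi 0)))
          =ᵐ[volume.restrict (Ioi 0)] G := by
        filter_upwards [ae_restrict_mem measurableSet_Ioi] with s hs
        rw [mem_Ioi] at hs
        have hnn : ∀ x ∈ Ioi (0:ℝ), ‖Function.uncurry F (s, x)‖ = F s x := by
          intro x hx
          rw [mem_Ioi] at hx
          rw [Function.uncurry]
          rw [Real.norm_eq_abs, abs_of_nonneg]
          rw [hF]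
          have hx' : (0:ℝ) ≤ x ^ ν := Real.rpow_nonneg hx.le _
          have hs' : (0:ℝ) ≤ s ^ (-(1:ℝ)/2) := Real.rpow_nonneg hs.le _
          positivity
        calc (∫ x, ‖Function.uncurry F (s, x)‖ ∂(volume.restrict (Ioi 0)))
            = ∫ x in Ioi (0:ℝ), F s x := setIntegral_congr_fun measurableSet_Ioi hnn
          _ = G s := by rw [hxint s hs, hG]
      exact hGint.congr hae.symm
  -- swap and conclude
  have hswap : (∫ s in Ioi (0:ℝ), ∫ x in Ioi (0:ℝ), F s x)
      = ∫ x in Ioi (0:ℝ), ∫ s in Ioi (0:ℝ), F s x :=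
    MeasureTheory.integral_integral_swap hInt
  have hGval : (∫ s in Ioi (0:ℝ), G s)
      = C2 * (2 * ((a*b)/2) ^ (ν/2+1) * besselK (ν/2+1) (a*b)) := by
    have hcongr : ∀ s ∈ Ioi (0:ℝ), G s
        = C2 * (s ^ ((ν/2+1) - 1) * Real.exp (-s - (a*b)^2/(4*s))) := by
      intro s hs
      rw [mem_Ioi] at hs
      rw [hG]
      simp only
      rw [hsplit s hs, show (ν/2+1) - 1 = ν/2 by ring]
    rw [setIntegral_congr_fun measurableSet_Ioi hcongr, integral_const_mul,
      besselK_intRep (by positivity : (0:ℝ) < a*b) (ν/2+1)]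
  calc ∫ x in Ioi (0:ℝ), Real.exp (-(a * Real.sqrt (x^2 + b^2))) * x ^ ν
      = ∫ x in Ioi (0:ℝ), (Real.sqrt π)⁻¹ * ∫ s in Ioi (0:ℝ), F s x :=
        setIntegral_congr_fun measurableSet_Ioi hFx
    _ = (Real.sqrt π)⁻¹ * ∫ x in Ioi (0:ℝ), ∫ s in Ioi (0:ℝ), F s x := integral_const_mul _ _
    _ = (Real.sqrt π)⁻¹ * ∫ s in Ioi (0:ℝ), ∫ x in Ioi (0:ℝ), F s x := by rw [← hswap]
    _ = (Real.sqrt π)⁻¹ * ∫ s in Ioi (0:ℝ), G s := by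
        congr 1
        refine setIntegral_congr_fun measurableSet_Ioi ?_
        intro s hs
        simp only [hG]
        exact hxint s hs
    _ = (Real.sqrt π)⁻¹ * (C2 * (2 * ((a*b)/2) ^ (ν/2+1) * besselK (ν/2+1) (a*b))) := by
        rw [hGval]
    _ = (Real.sqrt π)⁻¹ * Real.Gamma ((ν+1)/2) * (2 ^ (ν/2) * b ^ (ν/2+1) * a ^ (-(ν/2)))
        * besselK (ν/2+1) (a*b) := by
        rw [hC2]
        linear_combination ((Real.sqrt π)⁻¹ * Real.Gamma ((ν+1)/2)
          * besselK (ν/2+1) (a*b)) * const_algebra (ν := ν) ha hb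

lemma besselK_le_of_le {b z : ℝ} (hb : 0 < b) (hz : b ≤ z) (l : ℝ) :
    besselK l z ≤ Real.exp (-(z - b)) * besselK l b := by
  rw [besselK_def, besselK_def, ← integral_const_mul]
  apply setIntegral_mono_on (besselK_integrableOn (hb.trans_le hz) l)
    ((besselK_integrableOn hb l).const_mul _) measurableSet_Ioi
  intro t _
  rw [← mul_assoc, ← Real.exp_add]
  apply mul_le_mul_of_nonneg_right _ (Real.cosh_pos (l * t)).le
  apply Real.exp_le_exp.mpr
  have h1 : (1:ℝ) ≤ Real.cosh t := Real.one_le_cosh t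
  nlinarith

theorem stmt2 (ν μ : ℝ) (hν : ν > -1) (hμ : μ < 0) :
    ∫ x in Ioi (0:ℝ), Real.log (1 + Real.exp (-Real.sqrt (x ^ 2 + μ ^ 2))) * x ^ ν
      = |μ| ^ (ν / 2 + 1) * 2 ^ (ν / 2) * (1 / Real.sqrt π) * Real.Gamma ((ν + 1) / 2) *
          ∑' n : ℕ, (-1 : ℝ) ^ n * ((n : ℝ) + 1) ^ (-(ν / 2 + 1)) *
            besselK (ν / 2 + 1) (((n : ℝ) + 1) * |μ|) := by
  have hb : (0:ℝ) < |μ| := abs_pos.mpr hμ.ne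
  set b : ℝ := |μ| with hbdef
  have hμ2 : μ ^ 2 = b ^ 2 := (sq_abs μ).symm
  have hπ : (0:ℝ) < Real.sqrt π := Real.sqrt_pos.mpr pi_pos
  have hΓ : (0:ℝ) < Real.Gamma ((ν+1)/2) := Real.Gamma_pos_of_pos (by linarith)
  have heb1 : Real.exp (-b) < 1 := Real.exp_lt_one_iff.mpr (by linarith)
  set C : ℝ := b ^ (ν / 2 + 1) * 2 ^ (ν / 2) * (1 / Real.sqrt π) * Real.Gamma ((ν + 1) / 2)
    with hC
  set T : ℕ → ℝ := fun n => (-1 : ℝ) ^ n * ((n : ℝ) + 1) ^ (-(ν / 2 + 1)) *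
      besselK (ν / 2 + 1) (((n : ℝ) + 1) * b) with hT
  -- basic facts about sqrt
  have hsq : ∀ x : ℝ, 0 < x → x ≤ Real.sqrt (x^2 + b^2) := by
    intro x hx
    calc x = Real.sqrt (x^2) := (Real.sqrt_sq hx.le).symm
    _ ≤ Real.sqrt (x^2 + b^2) := Real.sqrt_le_sqrt (by nlinarith)
  have hsqb : ∀ x : ℝ, b ≤ Real.sqrt (x^2 + b^2) := by
    intro x
    calc b = Real.sqrt (b^2) := (Real.sqrt_sq hb.le).symm
    _ ≤ Real.sqrt (x^2 + b^2) := Real.sqrt_le_sqrt (by nlinarith)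
  -- integrability of each exponential term
  have hbase : IntegrableOn (fun x : ℝ => Real.exp (-x) * x ^ ν) (Ioi 0) := by
    have h := Real.GammaIntegral_convergent (s := ν + 1) (by linarith)
    simpa using h
  have hInInt : ∀ n : ℕ, IntegrableOn
      (fun x => Real.exp (-(((n:ℝ)+1) * Real.sqrt (x^2+b^2))) * x ^ ν) (Ioi 0) := by
    intro n
    apply Integrable.mono' hbase
    · apply Measurable.aestronglyMeasurable
      fun_prop
    · filter_upwards [ae_restrict_mem measurableSet_Ioi] with x hx
      rw [mem_Ioi] at hx
      have hxν : (0:ℝ) ≤ x ^ ν := Real.rpow_nonneg hx.le _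
      rw [Real.norm_eq_abs, abs_of_nonneg (mul_nonneg (Real.exp_pos _).le hxν)]
      apply mul_le_mul_of_nonneg_right _ hxν
      apply Real.exp_le_exp.mpr
      have h1 := hsq x hx
      have h2 : (1:ℝ) ≤ (n:ℝ)+1 := by linarith [Nat.cast_nonneg (α:=ℝ) n]
      have h3 : 0 < Real.sqrt (x^2+b^2) := lt_of_lt_of_le hx h1
      nlinarith
  -- value of each term integral
  have hkey : ∀ n : ℕ, ∫ x in Ioi (0:ℝ), Real.exp (-(((n:ℝ)+1) * Real.sqrt (x^2+b^2))) * x ^ ν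
      = (Real.sqrt π)⁻¹ * Real.Gamma ((ν+1)/2)
        * (2 ^ (ν/2) * b ^ (ν/2+1) * ((n:ℝ)+1) ^ (-(ν/2)))
        * besselK (ν/2+1) (((n:ℝ)+1)*b) := by
    intro n
    exact key_integral (by positivity) hb hν
  -- per-term identity
  have hterm : ∀ n : ℕ, ((-1:ℝ)^n / ((n:ℝ)+1))
      * ∫ x in Ioi (0:ℝ), Real.exp (-(((n:ℝ)+1) * Real.sqrt (x^2+b^2))) * x ^ ν
      = C * T n := by
    intro n
    rw [hkey n]
    simp only [hC, hT]
    have hn1 : (0:ℝ) < (n:ℝ)+1 := by positivity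
    have hsplit : ((n:ℝ)+1) ^ (-(ν/2+1)) = ((n:ℝ)+1) ^ (-(ν/2)) * (((n:ℝ)+1))⁻¹ := by
      rw [show -(ν/2+1) = -(ν/2) + (-1) by ring, Real.rpow_add hn1, Real.rpow_neg_one]
    rw [hsplit]
    field_simp
  -- summability of T
  have hTsummable : Summable T := by
    apply Summable.of_abs
    have hK0 : (0:ℝ) ≤ besselK (ν/2+1) b := besselK_nonneg hb _
    refine Summable.of_nonneg_of_le (fun n => abs_nonneg _) (fun n => ?_)
      (((summable_geometric_of_lt_one (Real.exp_pos _).le heb1)).mul_left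
        (besselK (ν/2+1) b))
    ·
      have hn1 : (0:ℝ) < (n:ℝ)+1 := by positivity
      have hz : b ≤ ((n:ℝ)+1) * b := by nlinarith
      have hKle := besselK_le_of_le hb hz (ν/2+1)
      have hKnn : (0:ℝ) ≤ besselK (ν/2+1) (((n:ℝ)+1)*b) := besselK_nonneg (by positivity) _
      have hpow1 : ((n:ℝ)+1) ^ (-(ν/2+1)) ≤ 1 := by
        apply Real.rpow_le_one_of_one_le_of_nonpos (by linarith) (by linarith)
      have hpow0 : (0:ℝ) ≤ ((n:ℝ)+1) ^ (-(ν/2+1)) := Real.rpow_nonneg hn1.le _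
      simp only [hT]
      simp only [abs_mul, abs_pow, abs_neg, abs_one, one_pow, one_mul]
      rw [abs_of_nonneg hpow0, abs_of_nonneg hKnn]
      have hexp : Real.exp (-(((n:ℝ)+1)*b - b)) = (Real.exp (-b)) ^ n := by
        rw [← Real.exp_nat_mul]
        congr 1
        push_cast
        ring
      calc ((n:ℝ)+1) ^ (-(ν/2+1)) * besselK (ν/2+1) (((n:ℝ)+1)*b)
          ≤ 1 * (Real.exp (-(((n:ℝ)+1)*b - b)) * besselK (ν/2+1) b) := by
            apply mul_le_mul hpow1 hKle hKnn (by norm_num)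
        _ = besselK (ν/2+1) b * (Real.exp (-b)) ^ n := by
            rw [one_mul, hexp]
            ring
  -- partial sums
  set S : ℕ → ℝ → ℝ := fun N x => ∑ n ∈ Finset.range N,
      ((-1:ℝ)^n / ((n:ℝ)+1)) * (Real.exp (-(((n:ℝ)+1) * Real.sqrt (x^2+b^2))) * x ^ ν) with hS
  have hSintg : ∀ N, IntegrableOn (S N) (Ioi 0) := by
    intro N
    apply integrable_finset_sum
    intro n _
    exact (hInInt n).const_mul _
  have hSval : ∀ N, ∫ x in Ioi (0:ℝ), S N x = ∑ n ∈ Finset.range N, C * T n := by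
    intro N
    simp only [hS]
    rw [integral_finset_sum _ (fun n _ => (hInInt n).const_mul _)]
    refine Finset.sum_congr rfl (fun n _ => ?_)
    rw [integral_const_mul]
    exact hterm n
  -- pointwise facts
  have hyfacts : ∀ x : ℝ, 0 < x →
      0 < Real.exp (-Real.sqrt (x^2+b^2)) ∧ Real.exp (-Real.sqrt (x^2+b^2)) ≤ Real.exp (-x)
        ∧ Real.exp (-Real.sqrt (x^2+b^2)) ≤ Real.exp (-b) := by
    intro x hx
    refine ⟨Real.exp_pos _, ?_, ?_⟩
    · exact Real.exp_le_exp.mpr (by linarith [hsq x hx])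
    · exact Real.exp_le_exp.mpr (by linarith [hsqb x])
  have hPrel : ∀ x : ℝ, 0 < x → ∀ N : ℕ,
      S N x = (∑ n ∈ Finset.range N,
        (-1:ℝ)^n * (Real.exp (-Real.sqrt (x^2+b^2)))^(n+1) / ((n:ℝ)+1)) * x ^ ν := by
    intro x hx N
    simp only [hS]
    rw [Finset.sum_mul]
    refine Finset.sum_congr rfl (fun n _ => ?_)
    have : Real.exp (-(((n:ℝ)+1) * Real.sqrt (x^2+b^2)))
        = (Real.exp (-Real.sqrt (x^2+b^2)))^(n+1) := by
      rw [← Real.exp_nat_mul]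
      congr 1
      push_cast
      ring
    rw [this]
    ring
  have hPest : ∀ x : ℝ, 0 < x → ∀ N : ℕ,
      |(∑ n ∈ Finset.range N,
        (-1:ℝ)^n * (Real.exp (-Real.sqrt (x^2+b^2)))^(n+1) / ((n:ℝ)+1))
        - Real.log (1 + Real.exp (-Real.sqrt (x^2+b^2)))|
      ≤ (Real.exp (-Real.sqrt (x^2+b^2)))^(N+1)
          / (1 - Real.exp (-Real.sqrt (x^2+b^2))) := by
    intro x hx N
    set y : ℝ := Real.exp (-Real.sqrt (x^2+b^2)) with hy
    obtain ⟨hy0, hyx, hyb⟩ := hyfacts x hx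
    rw [← hy] at hy0 hyx hyb
    have hy1 : y < 1 := lt_of_le_of_lt hyb heb1
    have habs : |(-y)| < 1 := by rw [abs_neg, abs_of_pos hy0]; exact hy1
    have h := Real.abs_log_sub_add_sum_range_le habs N
    have hsum : (∑ i ∈ Finset.range N, (-y)^(i+1)/((i:ℝ)+1))
        = -(∑ n ∈ Finset.range N, (-1:ℝ)^n * y^(n+1) / ((n:ℝ)+1)) := by
      rw [← Finset.sum_neg_distrib]
      refine Finset.sum_congr rfl (fun i _ => ?_)
      rw [neg_pow]
      push_cast
      ring
    rw [hsum, show (1:ℝ) - -y = 1 + y by ring, abs_neg, abs_of_pos hy0] at h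
    calc |(∑ n ∈ Finset.range N, (-1:ℝ)^n * y^(n+1)/((n:ℝ)+1)) - Real.log (1+y)|
        = |-(∑ n ∈ Finset.range N, (-1:ℝ)^n * y^(n+1)/((n:ℝ)+1)) + Real.log (1+y)| := by
          rw [← abs_neg]; congr 1; ring
      _ ≤ y^(N+1)/(1-y) := h
  -- dominated convergence
  set bound : ℝ → ℝ := fun x => (1 + (1 - Real.exp (-b))⁻¹) * (Real.exp (-x) * x ^ ν)
    with hbound_def
  have h1b : 0 < 1 - Real.exp (-b) := by linarith
  have hbound_int : IntegrableOn bound (Ioi 0) := hbase.const_mul _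
  have hSbound : ∀ N : ℕ, ∀ᵐ x ∂(volume.restrict (Ioi (0:ℝ))), ‖S N x‖ ≤ bound x := by
    intro N
    filter_upwards [ae_restrict_mem measurableSet_Ioi] with x hx
    rw [mem_Ioi] at hx
    set y : ℝ := Real.exp (-Real.sqrt (x^2+b^2)) with hy
    obtain ⟨hy0, hyx, hyb⟩ := hyfacts x hx
    rw [← hy] at hy0 hyx hyb
    have hy1 : y < 1 := lt_of_le_of_lt hyb heb1
    have hxν : (0:ℝ) ≤ x ^ ν := Real.rpow_nonneg hx.le _
    rw [hPrel x hx N, Real.norm_eq_abs, abs_mul, abs_of_nonneg hxν]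
    set P : ℝ := ∑ n ∈ Finset.range N, (-1:ℝ)^n * y^(n+1) / ((n:ℝ)+1) with hP
    have hest := hPest x hx N
    rw [← hy, ← hP] at hest
    have hlog0 : 0 ≤ Real.log (1+y) := Real.log_nonneg (by linarith)
    have hlogy : Real.log (1+y) ≤ y := by
      have := Real.log_le_sub_one_of_pos (show (0:ℝ) < 1+y by linarith)
      linarith
    have hyN : y^(N+1) ≤ y := by
      calc y^(N+1) ≤ y^1 := pow_le_pow_of_le_one hy0.le hy1.le (by omega)
      _ = y := pow_one y
    have hfrac : y^(N+1)/(1-y) ≤ y * (1 - Real.exp (-b))⁻¹ := by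
      rw [div_eq_mul_inv]
      have h1y : 0 < 1 - y := by linarith
      refine mul_le_mul hyN (inv_anti₀ h1b (by linarith)) (inv_nonneg.mpr h1y.le) hy0.le
    have hPabs : |P| ≤ y * (1 + (1 - Real.exp (-b))⁻¹) := by
      calc |P| ≤ |P - Real.log (1+y)| + |Real.log (1+y)| := by
            have := abs_sub_abs_le_abs_sub P (Real.log (1+y))
            have := abs_add_le (P - Real.log (1+y)) (Real.log (1+y))
            simpa using this
        _ ≤ y^(N+1)/(1-y) + Real.log (1+y) := by
            rw [abs_of_nonneg hlog0]
            exact add_le_add hest le_rfl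
        _ ≤ y * (1 - Real.exp (-b))⁻¹ + y := add_le_add hfrac hlogy
        _ = y * (1 + (1 - Real.exp (-b))⁻¹) := by ring
    rw [hbound_def]
    calc |P| * x ^ ν ≤ (y * (1 + (1 - Real.exp (-b))⁻¹)) * x ^ ν :=
          mul_le_mul_of_nonneg_right hPabs hxν
      _ ≤ ((1 + (1 - Real.exp (-b))⁻¹)) * (Real.exp (-x) * x ^ ν) := by
          have h2 : (0:ℝ) ≤ 1 + (1 - Real.exp (-b))⁻¹ := by positivity
          have := mul_le_mul_of_nonneg_right hyx hxν
          nlinarith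
  have hSlim : ∀ᵐ x ∂(volume.restrict (Ioi (0:ℝ))), Tendsto (fun N => S N x) atTop
      (𝓝 (Real.log (1 + Real.exp (-Real.sqrt (x^2+b^2))) * x ^ ν)) := by
    filter_upwards [ae_restrict_mem measurableSet_Ioi] with x hx
    rw [mem_Ioi] at hx
    set y : ℝ := Real.exp (-Real.sqrt (x^2+b^2)) with hy
    obtain ⟨hy0, hyx, hyb⟩ := hyfacts x hx
    rw [← hy] at hy0 hyx hyb
    have hy1 : y < 1 := lt_of_le_of_lt hyb heb1
    have hE : Tendsto (fun N : ℕ => y^(N+1)/(1-y)) atTop (𝓝 0) := by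
      have h0 : Tendsto (fun N : ℕ => y^(N+1)) atTop (𝓝 0) :=
        (tendsto_pow_atTop_nhds_zero_of_lt_one hy0.le hy1).comp (tendsto_add_atTop_nat 1)
      simpa using h0.div_const (1-y)
    have hPtend : Tendsto (fun N : ℕ => ∑ n ∈ Finset.range N, (-1:ℝ)^n * y^(n+1) / ((n:ℝ)+1))
        atTop (𝓝 (Real.log (1+y))) := by
      rw [tendsto_iff_norm_sub_tendsto_zero]
      apply squeeze_zero (fun N => norm_nonneg _) _ hE
      intro N
      rw [Real.norm_eq_abs]
      exact hPest x hx N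
    have := hPtend.mul_const (x ^ ν)
    apply Tendsto.congr _ this
    intro N
    exact (hPrel x hx N).symm
  have hDCT := MeasureTheory.tendsto_integral_of_dominated_convergence bound
    (fun N => (hSintg N).aestronglyMeasurable) hbound_int hSbound hSlim
  have hgeom : Tendsto (fun N => ∑ n ∈ Finset.range N, C * T n) atTop
      (𝓝 (∑' n, C * T n)) := (hTsummable.mul_left C).hasSum.tendsto_sum_nat
  have hDCT' : Tendsto (fun N => ∑ n ∈ Finset.range N, C * T n) atTop
      (𝓝 (∫ x in Ioi (0:ℝ), Real.log (1 + Real.exp (-Real.sqrt (x^2+b^2))) * x ^ ν)) := by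
    apply Tendsto.congr _ hDCT
    intro N
    exact hSval N
  have hfinal : (∫ x in Ioi (0:ℝ), Real.log (1 + Real.exp (-Real.sqrt (x^2+b^2))) * x ^ ν)
      = ∑' n, C * T n := tendsto_nhds_unique hDCT' hgeom
  calc ∫ x in Ioi (0:ℝ), Real.log (1 + Real.exp (-Real.sqrt (x ^ 2 + μ ^ 2))) * x ^ ν
      = ∫ x in Ioi (0:ℝ), Real.log (1 + Real.exp (-Real.sqrt (x ^ 2 + b ^ 2))) * x ^ ν := by
        rw [hμ2]
    _ = ∑' n, C * T n := hfinal
    _ = C * ∑' n, T n := tsum_mul_left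
    _ = b ^ (ν / 2 + 1) * 2 ^ (ν / 2) * (1 / Real.sqrt π) * Real.Gamma ((ν + 1) / 2) *
          ∑' n : ℕ, (-1 : ℝ) ^ n * ((n : ℝ) + 1) ^ (-(ν / 2 + 1)) *
            besselK (ν / 2 + 1) (((n : ℝ) + 1) * b) := by rw [hC, hT]
end

section
/- Let μ < 0. Then the series F(a) := Σ_{n=1}^∞ (-1)^{n+1} · exp((a + 1/2)·log n) · K_{3/2 - a}(n·|μ|) converges for every a ∈ ℂ and defines an entire (analytic on all of ℂ) function of a. -/
open MeasureTheory Real Set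

/-- Modified Bessel function of the second kind, with complex order. -/
noncomputable def besselKC (ν : ℂ) (z : ℝ) : ℂ :=
  ∫ t in Ioi (0:ℝ), (Real.exp (-z * Real.cosh t) : ℂ) * Complex.cosh (ν * (t : ℂ))

/-!
For `0 < s ≤ z` and `‖ν‖ ≤ R`, the bound `exp (-z cosh t) ≤ exp (s - z) exp (-s cosh t)` gives
`‖K_ν(z)‖ ≤ e^{s - z} ∫₀^∞ e^{R t - s cosh t} dt`, the integral being finite because `cosh t` grows
faster than any linear function. With `z = n|μ|`, `s = |μ|`, the `n`-th term of the series is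
therefore bounded on every disc `‖a‖ ≤ ρ` by `C n^{ρ + 1/2} e^{-n|μ|}`, a summable majorant.
Differentiating under the integral sign shows that each `K_ν(z)` is entire in `ν`, so the series
is a locally uniformly convergent series of entire functions.
-/

namespace Complex

lemma norm_cosh_le_exp_norm (w : ℂ) : ‖cosh w‖ ≤ Real.exp ‖w‖ := by
  have h := norm_add_le (exp w) (exp (-w))
  rw [cosh, norm_div, RCLike.norm_ofNat]
  linarith [norm_exp_le_exp_norm w, norm_neg w ▸ norm_exp_le_exp_norm (-w)]

lemma norm_sinh_le_exp_norm (w : ℂ) : ‖sinh w‖ ≤ Real.exp ‖w‖ := by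
  have h := norm_sub_le (exp w) (exp (-w))
  rw [sinh, norm_div, RCLike.norm_ofNat]
  linarith [norm_exp_le_exp_norm w, norm_neg w ▸ norm_exp_le_exp_norm (-w)]

end Complex

lemma sq_div_four_le_cosh {t : ℝ} (ht : 0 ≤ t) : t ^ 2 / 4 ≤ cosh t := by
  rw [cosh_eq]
  nlinarith [quadratic_le_exp_of_nonneg ht, exp_pos (-t)]

-- `z t² / 4 + (R + 1)² / z ≥ (R + 1) t` by AM-GM, so the `cosh` beats any linear growth.
lemma mul_sub_mul_cosh_le {z : ℝ} (hz : 0 < z) (R : ℝ) {t : ℝ} (ht : 0 ≤ t) :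
    R * t - z * cosh t ≤ (R + 1) ^ 2 / z - t := by
  have hcosh : z * (t ^ 2 / 4) ≤ z * cosh t := by gcongr; exact sq_div_four_le_cosh ht
  have hamgm : (R + 1) * t ≤ z * (t ^ 2 / 4) + (R + 1) ^ 2 / z := by
    rw [← sub_nonneg]
    have : z * (t ^ 2 / 4) + (R + 1) ^ 2 / z - (R + 1) * t = (z * t - 2 * (R + 1)) ^ 2 / (4 * z) := by
      field_simp; ring
    rw [this]; positivity
  linarith

lemma integrableOn_exp_mul_sub_mul_cosh {z : ℝ} (hz : 0 < z) (R : ℝ) :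
    IntegrableOn (fun t => exp (R * t - z * cosh t)) (Ioi 0) := by
  refine Integrable.mono' ((exp_neg_integrableOn_Ioi 0 one_pos).const_mul (exp ((R + 1) ^ 2 / z)))
    (by fun_prop : Continuous _).aestronglyMeasurable ?_
  filter_upwards [self_mem_ae_restrict measurableSet_Ioi] with t ht
  rw [norm_of_nonneg (exp_pos _).le, ← exp_add]
  exact exp_le_exp.2 (by linarith [mul_sub_mul_cosh_le hz R ((mem_Ioi.1 ht).le)])

lemma norm_mul_ofReal_of_nonneg (ν : ℂ) {t : ℝ} (ht : 0 ≤ t) : ‖ν * (t : ℂ)‖ = ‖ν‖ * t := by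
  rw [norm_mul, Complex.norm_real, norm_of_nonneg ht]

lemma norm_besselKC_integrand_le (ν : ℂ) (z : ℝ) {t : ℝ} (ht : 0 ≤ t) :
    ‖(exp (-z * cosh t) : ℂ) * Complex.cosh (ν * (t : ℂ))‖ ≤ exp (‖ν‖ * t - z * cosh t) := by
  rw [norm_mul, Complex.norm_real, norm_of_nonneg (exp_pos _).le, sub_eq_neg_add, neg_mul_eq_neg_mul,
    exp_add]
  gcongr
  exact (Complex.norm_cosh_le_exp_norm _).trans_eq (by rw [norm_mul_ofReal_of_nonneg ν ht])

lemma norm_besselKC_integrand_deriv_le (ν : ℂ) (z : ℝ) {t : ℝ} (ht : 0 ≤ t) :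
    ‖(exp (-z * cosh t) : ℂ) * (Complex.sinh (ν * (t : ℂ)) * (t : ℂ))‖ ≤
      exp ((‖ν‖ + 1) * t - z * cosh t) := by
  rw [norm_mul, norm_mul, Complex.norm_real, Complex.norm_real, norm_of_nonneg (exp_pos _).le,
    norm_of_nonneg ht, add_mul, one_mul, sub_eq_neg_add, neg_mul_eq_neg_mul, exp_add, exp_add]
  gcongr
  · exact (Complex.norm_sinh_le_exp_norm _).trans_eq (by rw [norm_mul_ofReal_of_nonneg ν ht])
  · linarith [add_one_le_exp t]

lemma integrableOn_besselKC_integrand (ν : ℂ) {z : ℝ} (hz : 0 < z) :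
    IntegrableOn (fun t : ℝ => (exp (-z * cosh t) : ℂ) * Complex.cosh (ν * (t : ℂ))) (Ioi 0) := by
  refine Integrable.mono' (integrableOn_exp_mul_sub_mul_cosh hz ‖ν‖)
    (by fun_prop : Continuous _).aestronglyMeasurable ?_
  filter_upwards [self_mem_ae_restrict measurableSet_Ioi] with t ht
  exact norm_besselKC_integrand_le ν z ((mem_Ioi.1 ht).le)

lemma differentiable_besselKC {z : ℝ} (hz : 0 < z) : Differentiable ℂ fun ν => besselKC ν z := by
  intro ν₀
  have h_deriv : ∀ t : ℝ, ∀ ν : ℂ, HasDerivAt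
      (fun ν : ℂ => (exp (-z * cosh t) : ℂ) * Complex.cosh (ν * (t : ℂ)))
      ((exp (-z * cosh t) : ℂ) * (Complex.sinh (ν * (t : ℂ)) * (t : ℂ))) ν := fun t ν =>
    (((hasDerivAt_id ν).mul_const (t : ℂ)).ccosh.const_mul _).congr_deriv (by simp)
  refine (hasDerivAt_integral_of_dominated_loc_of_deriv_le (μ := volume.restrict (Ioi 0))
    (F := fun ν t => (exp (-z * cosh t) : ℂ) * Complex.cosh (ν * (t : ℂ)))
    (Metric.ball_mem_nhds ν₀ one_pos)
    (.of_forall fun ν => (by fun_prop : Continuous _).aestronglyMeasurable)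
    (integrableOn_besselKC_integrand ν₀ hz) (by fun_prop : Continuous _).aestronglyMeasurable
    ?_ (integrableOn_exp_mul_sub_mul_cosh hz (‖ν₀‖ + 2))
    (.of_forall fun t ν _ => h_deriv t ν)).2.differentiableAt
  filter_upwards [self_mem_ae_restrict measurableSet_Ioi] with t ht ν hν
  have hν' : ‖ν‖ ≤ ‖ν₀‖ + 1 := by
    linarith [norm_le_norm_add_norm_sub' ν ν₀, (mem_ball_iff_norm.1 hν).le]
  refine (norm_besselKC_integrand_deriv_le ν z ((mem_Ioi.1 ht).le)).trans (exp_le_exp.2 ?_)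
  nlinarith [(mem_Ioi.1 ht).le]

lemma norm_besselKC_le {ν : ℂ} {R s z : ℝ} (hν : ‖ν‖ ≤ R) (hs : 0 < s) (hsz : s ≤ z) :
    ‖besselKC ν z‖ ≤ exp (s - z) * ∫ t in Ioi 0, exp (R * t - s * cosh t) := by
  rw [besselKC, ← integral_const_mul]
  refine norm_integral_le_of_norm_le ((integrableOn_exp_mul_sub_mul_cosh hs R).const_mul _) ?_
  filter_upwards [self_mem_ae_restrict measurableSet_Ioi] with t ht
  refine (norm_besselKC_integrand_le ν z ((mem_Ioi.1 ht).le)).trans ?_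
  rw [← exp_add]
  refine exp_le_exp.2 ?_
  nlinarith [one_le_cosh t, (mem_Ioi.1 ht).le]

lemma summable_exp_mul_log_mul_exp_neg (σ : ℝ) {c : ℝ} (hc : 0 < c) :
    Summable fun n : ℕ => exp (σ * log (n + 1)) * exp (-c * (n + 1)) := by
  set k := ⌈σ⌉₊
  have hshift : Summable fun n : ℕ => ((n : ℝ) + 1) ^ k * exp (-c * (n + 1)) := by
    simpa using (summable_nat_add_iff 1).2 (summable_pow_mul_exp_neg_nat_mul k hc)
  refine hshift.of_nonneg_of_le (fun n => by positivity) fun n => ?_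
  have hn : (1 : ℝ) ≤ n + 1 := by linarith [n.cast_nonneg (α := ℝ)]
  gcongr
  calc exp (σ * log (n + 1)) ≤ exp (k * log (n + 1)) := by
        gcongr
        · exact log_nonneg hn
        · exact Nat.le_ceil σ
    _ = ((n : ℝ) + 1) ^ k := by rw [exp_nat_mul, exp_log (by linarith)]

/-- Indexed from `0`: this is the paper's term of index `n + 1`, with `c = |μ|`. -/
noncomputable def besselSeriesTerm (c : ℝ) (a : ℂ) (n : ℕ) : ℂ :=
  (-1 : ℂ) ^ n * Complex.exp ((a + 1/2) * (Real.log ((n : ℝ) + 1) : ℂ)) *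
    besselKC (3/2 - a) (((n : ℝ) + 1) * c)

lemma norm_besselSeriesTerm_le {c : ℝ} (hc : 0 < c) {ρ : ℝ} {a : ℂ} (ha : ‖a‖ ≤ ρ) (n : ℕ) :
    ‖besselSeriesTerm c a n‖ ≤ exp ((ρ + 1/2) * log (n + 1)) * exp (-c * (n + 1)) *
      (exp c * ∫ t in Ioi 0, exp ((ρ + 3/2) * t - c * cosh t)) := by
  have hn : (1 : ℝ) ≤ n + 1 := by linarith [n.cast_nonneg (α := ℝ)]
  have hpow : ‖Complex.exp ((a + 1/2) * (log ((n : ℝ) + 1) : ℂ))‖ ≤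
      exp ((ρ + 1/2) * log (n + 1)) := by
    have hre : ((a + 1/2) * (log ((n : ℝ) + 1) : ℂ)).re = (a.re + 1/2) * log (n + 1) := by simp
    rw [Complex.norm_exp, hre]
    gcongr
    · exact log_nonneg hn
    · exact (Complex.re_le_norm a).trans ha
  have hbessel : ‖besselKC (3/2 - a) ((n + 1) * c)‖ ≤
      exp (c - (n + 1) * c) * ∫ t in Ioi 0, exp ((ρ + 3/2) * t - c * cosh t) :=
    norm_besselKC_le (by linarith [norm_sub_le (3/2 : ℂ) a, (by norm_num : ‖(3/2 : ℂ)‖ = 3/2)])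
      hc (le_mul_of_one_le_left hc.le hn)
  rw [besselSeriesTerm, norm_mul, norm_mul, norm_pow, norm_neg, norm_one, one_pow, one_mul]
  calc _ ≤ _ := mul_le_mul hpow hbessel (norm_nonneg _) (exp_pos _).le
    _ = _ := by rw [show c - (n + 1) * c = -c * (n + 1) + c by ring, exp_add]; ring

lemma summable_besselSeriesTerm {c : ℝ} (hc : 0 < c) (a : ℂ) : Summable (besselSeriesTerm c a) :=
  .of_norm_bounded ((summable_exp_mul_log_mul_exp_neg _ hc).mul_right _)
    (norm_besselSeriesTerm_le hc le_rfl)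

lemma differentiable_besselSeriesTerm {c : ℝ} (hc : 0 < c) (n : ℕ) :
    Differentiable ℂ fun a => besselSeriesTerm c a n := by
  have hbessel := (differentiable_besselKC (by positivity : 0 < ((n : ℝ) + 1) * c)).comp
    ((differentiable_const (3/2 : ℂ)).sub differentiable_id)
  unfold besselSeriesTerm
  fun_prop

lemma differentiable_tsum_besselSeriesTerm {c : ℝ} (hc : 0 < c) :
    Differentiable ℂ fun a => ∑' n, besselSeriesTerm c a n := by
  intro a
  have hball : ∀ w ∈ Metric.ball a 1, ‖w‖ ≤ ‖a‖ + 1 := fun w hw => by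
    linarith [norm_le_norm_add_norm_sub' w a, (mem_ball_iff_norm.1 hw).le]
  refine (Complex.differentiableOn_tsum_of_summable_norm
    ((summable_exp_mul_log_mul_exp_neg _ hc).mul_right _)
    (fun n => (differentiable_besselSeriesTerm hc n).differentiableOn) Metric.isOpen_ball
    fun n w hw => norm_besselSeriesTerm_le hc (hball w hw) n).differentiableAt
    (Metric.ball_mem_nhds a one_pos)

theorem stmt6 (μ : ℝ) (hμ : μ < 0) :
    (∀ a : ℂ, Summable (fun n : ℕ =>
      (-1 : ℂ) ^ n * Complex.exp ((a + 1/2) * (Real.log ((n : ℝ) + 1) : ℂ)) *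
        besselKC (3/2 - a) (((n : ℝ) + 1) * |μ|))) ∧
    ∀ a : ℂ, AnalyticAt ℂ (fun a : ℂ => ∑' n : ℕ,
      (-1 : ℂ) ^ n * Complex.exp ((a + 1/2) * (Real.log ((n : ℝ) + 1) : ℂ)) *
        besselKC (3/2 - a) (((n : ℝ) + 1) * |μ|)) a := by
  have hc : 0 < |μ| := abs_pos.2 hμ.ne
  exact ⟨summable_besselSeriesTerm hc, (differentiable_tsum_besselSeriesTerm hc).analyticAt⟩
end

section
/- Let μ be a real number with -π < μ < 0 and let a be a real number with a > 1/2. Then (Γ(a)/2) · Σ_{n∈ℤ} ( (2a-1)·(2n+1)²π² - μ² ) / ( (2n+1)²π² + μ² )^{a+1} = Σ_{k=0}^∞ (-1)^k · ( Γ(k+a)·(2a+2k-1) / k! ) · ( (2^{2a+2k} - 1) / (2π)^{2a+2k} ) · ζ(2a+2k) · μ^{2k}, where both series converge absolutely. -/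
/-!
For `X > 0` and `|d| < X` the binomial series `Γ(a) (1 - t)^(-a) = ∑ Γ(a + k) / k! tᵏ`, used
with exponents `a` and `a + 1`, expands `Γ(a) ((2a - 1) X + d) / (X - d)^(a + 1)` as
`∑ₖ Γ(a + k) (2a + 2k - 1) / k! · dᵏ X^(-(a + k))`. Take `X = (2m + 1)² π²` and `d = -μ²`.
Since `a > 1/2` the coefficients are nonnegative, and as `μ² < π² ≤ X` the double series is
dominated by `X^(-a)` times the same series at `t = μ² / π²`; so it converges absolutely and may be
summed over `m` first, where `∑ₘ (2m + 1)^(-s) = (1 - 2^(-s)) ζ(s)`. The sum over `ℤ` is twice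
the sum over `ℕ` because the summand is even in `2n + 1`.
-/

open Real
open scoped Nat

lemma Real.Gamma_add_nat_eq_mul_ascPochhammer_eval {a : ℝ} (ha : 0 < a) (n : ℕ) :
    Gamma (a + n) = Gamma a * (ascPochhammer ℝ n).eval a := by
  induction n with
  | zero => simp
  | succ n ih =>
    rw [Nat.cast_succ, ← add_assoc, Gamma_add_one (by positivity), ih, ascPochhammer_succ_right,
      Polynomial.eval_mul]
    simp only [Polynomial.eval_add, Polynomial.eval_X, Polynomial.eval_natCast]
    ring

lemma Ring.choose_add_nat_sub_one_eq_Gamma_div {a : ℝ} (ha : 0 < a) (n : ℕ) :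
    Ring.choose (a + n - 1) n = Gamma (a + n) / (n ! * Gamma a) := by
  rw [Ring.choose_eq_smul, Polynomial.descPochhammer_smeval_eq_ascPochhammer,
    Polynomial.ascPochhammer_smeval_cast, ← Polynomial.ascPochhammer_smeval_cast ℝ,
    ← Polynomial.eval_eq_smeval, Real.Gamma_add_nat_eq_mul_ascPochhammer_eval ha, smul_eq_mul]
  rw [show a + n - 1 - n + 1 = a by ring]
  have : Gamma a ≠ 0 := (Gamma_pos_of_pos ha).ne'
  field_simp

lemma hasSum_Gamma_add_nat_div_factorial_mul_pow {a t : ℝ} (ha : 0 < a) (ht : |t| < 1) :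
    HasSum (fun k : ℕ => Gamma (a + k) / k ! * t ^ k) (Gamma a * (1 - t) ^ (-a)) := by
  have h := (one_div_one_sub_rpow_hasFPowerSeriesOnBall_zero a).hasSum (y := t)
    (by simpa [edist_dist] using ht)
  simp only [FormalMultilinearSeries.ofScalars_apply_eq, zero_add, smul_eq_mul,
    Ring.choose_add_nat_sub_one_eq_Gamma_div ha] at h
  have : Gamma a ≠ 0 := (Gamma_pos_of_pos ha).ne'
  rw [rpow_neg (by linarith [(abs_lt.1 ht).2]), ← one_div]
  refine (h.mul_left (Gamma a)).congr_fun fun k => ?_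
  field_simp

lemma rpow_neg_add_natCast {X : ℝ} (hX : 0 < X) (a : ℝ) (k : ℕ) :
    X ^ (-(a + k)) = X ^ (-a) / X ^ k := by
  rw [neg_add, rpow_add hX, rpow_neg hX.le (k : ℝ), rpow_natCast, div_eq_mul_inv]

lemma sq_mul_sq_rpow {x y : ℝ} (hx : 0 ≤ x) (hy : 0 ≤ y) (r : ℝ) :
    (x ^ 2 * y ^ 2) ^ r = x ^ (2 * r) * y ^ (2 * r) := by
  rw [mul_rpow (by positivity) (by positivity), ← rpow_natCast_mul hx, ← rpow_natCast_mul hy,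
    Nat.cast_ofNat]

noncomputable def expansionCoeff (a : ℝ) (k : ℕ) : ℝ :=
  Gamma (a + k) * (2 * a + 2 * k - 1) / k !

lemma expansionCoeff_nonneg {a : ℝ} (ha : 1 / 2 ≤ a) (k : ℕ) : 0 ≤ expansionCoeff a k := by
  have : 0 < Gamma (a + k) := Gamma_pos_of_pos (by positivity)
  have : (0 : ℝ) ≤ 2 * a + 2 * k - 1 := by linarith [k.cast_nonneg (α := ℝ)]
  unfold expansionCoeff
  positivity

lemma hasSum_expansionCoeff_mul_pow {a t : ℝ} (ha : 0 < a) (ht : |t| < 1) :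
    HasSum (fun k : ℕ => expansionCoeff a k * t ^ k)
      (Gamma a * ((2 * a - 1) + t) / (1 - t) ^ (a + 1)) := by
  have h1t : 0 < 1 - t := by linarith [(abs_lt.1 ht).2]
  -- `2a + 2k - 1 = (2a - 1) + 2k`, and the `2k` part is the series for `a + 1` shifted by one.
  have hlow := (hasSum_Gamma_add_nat_div_factorial_mul_pow ha ht).mul_left (2 * a - 1)
  have hshift : HasSum (fun k : ℕ => 2 * k * Gamma (a + k) / k ! * t ^ k)
      (2 * t * (Gamma (a + 1) * (1 - t) ^ (-(a + 1)))) := by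
    have h := (hasSum_Gamma_add_nat_div_factorial_mul_pow (a := a + 1) (by positivity) ht).mul_left
      (2 * t)
    have := HasSum.zero_add (f := fun k : ℕ => 2 * k * Gamma (a + k) / k ! * t ^ k)
      (h.congr_fun fun k => ?_)
    · simpa using this
    · push_cast [Nat.factorial_succ]
      rw [show a + (k + 1 : ℝ) = a + 1 + k by ring]
      field_simp
      ring
  have hsplit : ∀ k : ℕ, expansionCoeff a k * t ^ k
      = (2 * a - 1) * (Gamma (a + k) / k ! * t ^ k) + 2 * k * Gamma (a + k) / k ! * t ^ k :=
    fun k => by unfold expansionCoeff; ring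
  have hsum : (2 * a - 1) * (Gamma a * (1 - t) ^ (-a))
      + 2 * t * (Gamma (a + 1) * (1 - t) ^ (-(a + 1)))
      = Gamma a * ((2 * a - 1) + t) / (1 - t) ^ (a + 1) := by
    have hpow : (1 - t) ^ (a + 1) = (1 - t) ^ a * (1 - t) := rpow_add_one h1t.ne' a
    rw [Gamma_add_one ha.ne', rpow_neg h1t.le, rpow_neg h1t.le, hpow]
    field_simp
    ring
  rw [← hsum]
  exact (hlow.add hshift).congr_fun hsplit

lemma hasSum_expansionCoeff_mul_pow_mul_rpow {a X d : ℝ} (ha : 0 < a) (hX : 0 < X)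
    (hd : |d| < X) :
    HasSum (fun k : ℕ => expansionCoeff a k * d ^ k * X ^ (-(a + k)))
      (Gamma a * ((2 * a - 1) * X + d) / (X - d) ^ (a + 1)) := by
  have ht : |d / X| < 1 := by rwa [abs_div, abs_of_pos hX, div_lt_one hX]
  have h1t : 0 < 1 - d / X := by linarith [(abs_lt.1 ht).2]
  have hval : X ^ (-a) * (Gamma a * ((2 * a - 1) + d / X) / (1 - d / X) ^ (a + 1))
      = Gamma a * ((2 * a - 1) * X + d) / (X - d) ^ (a + 1) := by
    have hXd : X - d = X * (1 - d / X) := by field_simp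
    rw [hXd, mul_rpow hX.le h1t.le, rpow_add_one hX.ne', rpow_neg hX.le]
    field_simp
  rw [← hval]
  refine ((hasSum_expansionCoeff_mul_pow ha ht).mul_left (X ^ (-a))).congr_fun fun k => ?_
  rw [rpow_neg_add_natCast hX, div_pow]
  ring

lemma hasSum_odd_rpow_neg {s : ℝ} (hs : 1 < s) :
    HasSum (fun m : ℕ => (2 * m + 1 : ℝ) ^ (-s)) ((1 - 2 ^ (-s)) * ∑' n : ℕ, (n : ℝ) ^ (-s)) := by
  set f : ℕ → ℝ := fun n => (n : ℝ) ^ (-s)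
  have hf : Summable f := summable_nat_rpow.mpr (by linarith)
  have heven : HasSum (fun m => f (2 * m)) (2 ^ (-s) * ∑' n, f n) :=
    (hf.hasSum.mul_left _).congr_fun fun m => by
      simp only [f, Nat.cast_mul, Nat.cast_ofNat, mul_rpow zero_le_two m.cast_nonneg]
  have hodd : HasSum (fun m => f (2 * m + 1)) (∑' m, f (2 * m + 1)) :=
    (hf.comp_injective (i := fun m => 2 * m + 1) fun x y h => by simp only at h; omega).hasSum
  have htotal := (heven.even_add_odd hodd).unique hf.hasSum
  rw [show (1 - 2 ^ (-s)) * ∑' n, f n = ∑' m, f (2 * m + 1) by linarith]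
  exact hodd.congr_fun fun m => by simp [f]

lemma riemannZeta_ofReal_eq_tsum {s : ℝ} (hs : 1 < s) :
    riemannZeta s = ((∑' n : ℕ, (n : ℝ) ^ (-s) : ℝ) : ℂ) := by
  rw [zeta_eq_tsum_one_div_nat_cpow (by simpa using hs), Complex.ofReal_tsum]
  refine tsum_congr fun n => ?_
  rw [rpow_neg n.cast_nonneg, Complex.ofReal_inv, Complex.ofReal_cpow n.cast_nonneg,
    Complex.ofReal_natCast, one_div]

lemma abs_expansionCoeff_mul_pow_mul_rpow_le {a c X d : ℝ} (ha : 1 / 2 ≤ a) (hc : 0 < c)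
    (hcX : c ≤ X) (k : ℕ) :
    |expansionCoeff a k * d ^ k * X ^ (-(a + k))|
      ≤ X ^ (-a) * (expansionCoeff a k * (|d| / c) ^ k) := by
  have hX : 0 < X := hc.trans_le hcX
  rw [rpow_neg_add_natCast hX, abs_mul, abs_mul, abs_of_nonneg (expansionCoeff_nonneg ha k),
    abs_pow, abs_of_nonneg (by positivity : 0 ≤ X ^ (-a) / X ^ k), div_pow, div_eq_mul_inv,
    div_eq_mul_inv]
  have := expansionCoeff_nonneg ha k
  have : (X ^ k)⁻¹ ≤ (c ^ k)⁻¹ := inv_anti₀ (by positivity) (pow_le_pow_left₀ hc.le hcX k)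
  have : 0 ≤ X ^ (-a) := by positivity
  calc _ = expansionCoeff a k * |d| ^ k * X ^ (-a) * (X ^ k)⁻¹ := by ring
    _ ≤ expansionCoeff a k * |d| ^ k * X ^ (-a) * (c ^ k)⁻¹ := by gcongr
    _ = _ := by ring

lemma exists_hasSum_odd_rows_and_cols {a d : ℝ} (ha : 1 / 2 < a) (hd : |d| < π ^ 2) :
    ∃ S, HasSum (fun m : ℕ => Gamma a * ((2 * a - 1) * ((2 * m + 1) ^ 2 * π ^ 2) + d) /
          ((2 * m + 1) ^ 2 * π ^ 2 - d) ^ (a + 1)) S ∧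
      HasSum (fun k : ℕ => expansionCoeff a k * d ^ k * (π ^ (-(2 * a + 2 * k)) *
          ((1 - 2 ^ (-(2 * a + 2 * k))) * ∑' n : ℕ, (n : ℝ) ^ (-(2 * a + 2 * k))))) S := by
  have hπ : 0 < π ^ 2 := by positivity
  have hX : ∀ m : ℕ, π ^ 2 ≤ (2 * m + 1) ^ 2 * π ^ 2 := fun m =>
    le_mul_of_one_le_left hπ.le (one_le_pow₀ (by linarith [m.cast_nonneg (α := ℝ)]))
  have hXrpow : ∀ (m : ℕ) (r : ℝ), ((2 * m + 1) ^ 2 * π ^ 2 : ℝ) ^ (-r)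
      = π ^ (-(2 * r)) * (2 * m + 1 : ℝ) ^ (-(2 * r)) := fun m r => by
    rw [sq_mul_sq_rpow (by positivity) pi_pos.le, mul_comm, neg_mul_eq_mul_neg]
  set T : ℕ × ℕ → ℝ := fun p =>
    expansionCoeff a p.2 * d ^ p.2 * ((2 * p.1 + 1) ^ 2 * π ^ 2) ^ (-(a + p.2))
  have hcol : ∀ k : ℕ, HasSum (fun m => T (m, k)) (expansionCoeff a k * d ^ k *
      (π ^ (-(2 * a + 2 * k)) * ((1 - 2 ^ (-(2 * a + 2 * k))) *
        ∑' n : ℕ, (n : ℝ) ^ (-(2 * a + 2 * k))))) := fun k =>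
    ((hasSum_odd_rpow_neg (by linarith [k.cast_nonneg (α := ℝ)])).mul_left _).mul_left _
      |>.congr_fun fun m => by simp only [T, hXrpow, mul_add, mul_assoc]
  have hT : Summable T := by
    have hrow : Summable fun m : ℕ => ((2 * m + 1) ^ 2 * π ^ 2 : ℝ) ^ (-a) :=
      ((hasSum_odd_rpow_neg (by linarith)).mul_left _).summable.congr fun m => (hXrpow m a).symm
    have hcoeff : Summable fun k => expansionCoeff a k * (|d| / π ^ 2) ^ k :=
      (hasSum_expansionCoeff_mul_pow (by linarith)
        (by rwa [abs_div, abs_abs, abs_of_pos hπ, div_lt_one hπ])).summable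
    refine Summable.of_norm_bounded (hrow.mul_of_nonneg hcoeff (fun _ => by positivity)
      fun k => by have := expansionCoeff_nonneg ha.le k; positivity) fun p =>
        abs_expansionCoeff_mul_pow_mul_rpow_le ha.le hπ (hX p.1) p.2
  refine ⟨∑' p, T p, hT.hasSum.prod_fiberwise fun m => ?_,
    ((Equiv.prodComm ℕ ℕ).hasSum_iff.2 hT.hasSum).prod_fiberwise hcol⟩
  exact hasSum_expansionCoeff_mul_pow_mul_rpow (by linarith) (hπ.trans_le (hX m))
    (hd.trans_le (hX m))

lemma HasSum.int_odd_of_even {g : ℝ → ℝ} (hg : ∀ y, g (-y) = g y) {W : ℝ}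
    (h : HasSum (fun m : ℕ => g (2 * m + 1)) W) :
    HasSum (fun n : ℤ => g (2 * n + 1)) (2 * W) := by
  rw [two_mul]
  refine HasSum.of_nat_of_neg_add_one (by simpa using h) (h.congr_fun fun m => ?_)
  rw [← hg]
  push_cast
  ring_nf

lemma pi_rpow_neg_mul_one_sub_two_rpow_neg (s : ℝ) :
    π ^ (-s) * (1 - 2 ^ (-s)) = (2 ^ s - 1) / (2 * π) ^ s := by
  rw [mul_rpow zero_le_two pi_pos.le, rpow_neg pi_pos.le, rpow_neg zero_le_two]
  have : (0 : ℝ) < 2 ^ s := by positivity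
  have : 0 < π ^ s := by positivity
  field_simp

theorem stmt8 (μ a : ℝ) (hμ₁ : -π < μ) (hμ₂ : μ < 0) (ha : a > 1/2) :
    Summable (fun n : ℤ => ((2 * a - 1) * (2 * (n : ℝ) + 1) ^ 2 * π ^ 2 - μ ^ 2) /
        ((2 * (n : ℝ) + 1) ^ 2 * π ^ 2 + μ ^ 2) ^ (a + 1)) ∧
    Summable (fun k : ℕ =>
      (((-1 : ℝ) ^ k * (Real.Gamma ((k : ℝ) + a) * (2 * a + 2 * (k : ℝ) - 1) / (Nat.factorial k)) *
          (((2 : ℝ) ^ (2 * a + 2 * (k : ℝ)) - 1) / (2 * π) ^ (2 * a + 2 * (k : ℝ))) *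
          μ ^ (2 * k) : ℝ) : ℂ) * riemannZeta ((2 * a + 2 * (k : ℝ) : ℝ) : ℂ)) ∧
    ((Real.Gamma a / 2 *
        ∑' n : ℤ, ((2 * a - 1) * (2 * (n : ℝ) + 1) ^ 2 * π ^ 2 - μ ^ 2) /
          ((2 * (n : ℝ) + 1) ^ 2 * π ^ 2 + μ ^ 2) ^ (a + 1) : ℝ) : ℂ)
      = ∑' k : ℕ,
          (((-1 : ℝ) ^ k * (Real.Gamma ((k : ℝ) + a) * (2 * a + 2 * (k : ℝ) - 1) /
              (Nat.factorial k)) *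
            (((2 : ℝ) ^ (2 * a + 2 * (k : ℝ)) - 1) / (2 * π) ^ (2 * a + 2 * (k : ℝ))) *
            μ ^ (2 * k) : ℝ) : ℂ) * riemannZeta ((2 * a + 2 * (k : ℝ) : ℝ) : ℂ) := by
  have hμπ : |-μ ^ 2| < π ^ 2 := by
    rw [abs_neg, abs_of_nonneg (sq_nonneg μ)]
    nlinarith
  obtain ⟨S, hrows, hcols⟩ := exists_hasSum_odd_rows_and_cols ha hμπ
  have hΓ : Gamma a ≠ 0 := (Gamma_pos_of_pos (by linarith)).ne'
  have hZ := HasSum.int_odd_of_even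
    (g := fun y => ((2 * a - 1) * y ^ 2 * π ^ 2 - μ ^ 2) / (y ^ 2 * π ^ 2 + μ ^ 2) ^ (a + 1))
    (fun y => by simp only [neg_sq]) ((hrows.div_const (Gamma a)).congr_fun fun m => by
      rw [mul_div_assoc, mul_div_cancel_left₀ _ hΓ, sub_neg_eq_add, ← sub_eq_add_neg, mul_assoc])
  have hterm : ∀ k : ℕ, (((-1 : ℝ) ^ k * (Gamma ((k : ℝ) + a) * (2 * a + 2 * (k : ℝ) - 1) / k !) *
      (((2 : ℝ) ^ (2 * a + 2 * (k : ℝ)) - 1) / (2 * π) ^ (2 * a + 2 * (k : ℝ))) *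
      μ ^ (2 * k) : ℝ) : ℂ) * riemannZeta ((2 * a + 2 * (k : ℝ) : ℝ) : ℂ)
      = ((expansionCoeff a k * (-μ ^ 2) ^ k * (π ^ (-(2 * a + 2 * k)) *
          ((1 - 2 ^ (-(2 * a + 2 * k))) * ∑' n : ℕ, (n : ℝ) ^ (-(2 * a + 2 * k)))) : ℝ) : ℂ) := by
    intro k
    rw [riemannZeta_ofReal_eq_tsum (by linarith [k.cast_nonneg (α := ℝ)]), ← Complex.ofReal_mul,
      ← mul_assoc (π ^ _), pi_rpow_neg_mul_one_sub_two_rpow_neg, expansionCoeff, neg_pow, pow_mul,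
      add_comm (k : ℝ) a]
    ring_nf
  refine ⟨hZ.summable, (Complex.hasSum_ofReal.2 hcols).summable.congr fun k => (hterm k).symm, ?_⟩
  rw [hZ.tsum_eq, tsum_congr hterm, ← Complex.ofReal_tsum, hcols.tsum_eq]
  congr 1
  field_simp
end

section
/- For every real x > 0 one has Σ_{n∈ℤ} ( (2πn)² - x ) / ( (2πn)² + x )² = -1 / ( 4·sinh²(√x/2) ), where the series converges absolutely. -/
/-!
Differentiating the Mittag-Leffler expansion of `π cot (π z)` gives
`∑ₙ 1 / (z + n)² = π² / sin² (π z)`. At `z = i √x / (2π)` one has `sin (π z) = i sinh (√x / 2)`,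
and the real part of `1 / (2πn + i √x)²` is the `n`-th term of the series.
-/

open Real

section

open Complex

lemma hasDerivAt_pi_mul_cot_pi_mul {z : ℂ} (hz : Complex.sin (π * z) ≠ 0) :
    HasDerivAt (fun x : ℂ => π * cot (π * x)) (-(π ^ 2 / Complex.sin (π * z) ^ 2)) z := by
  have hlin : HasDerivAt (fun x : ℂ => π * x) π z := by
    simpa using (hasDerivAt_id z).const_mul (π : ℂ)
  have hcot := ((Complex.hasDerivAt_cos _).div (Complex.hasDerivAt_sin _) hz).comp z hlin
  simp only [Function.comp_def, Pi.div_apply, ← Complex.cot_eq_cos_div_sin] at hcot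
  refine (hcot.const_mul (π : ℂ)).congr_deriv ?_
  have hpyth : -Complex.sin (π * z) * Complex.sin (π * z)
      - Complex.cos (π * z) * Complex.cos (π * z) = -1 := by
    linear_combination -Complex.sin_sq_add_cos_sq (π * z)
  rw [hpyth]
  ring

lemma summable_one_div_add_int_sq (z : ℂ) : Summable fun n : ℤ => 1 / (z + n) ^ 2 := by
  simpa using EisensteinSeries.linear_right_summable z 1 (k := 2) le_rfl

lemma hasSum_one_div_add_int_sq {z : ℂ} (hz : 0 < z.im) :
    HasSum (fun n : ℤ => 1 / (z + n) ^ 2) (π ^ 2 / Complex.sin (π * z) ^ 2) := by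
  refine (summable_one_div_add_int_sq z).hasSum_iff.mpr ?_
  have hsin : Complex.sin (π * z) ≠ 0 :=
    sin_pi_mul_ne_zero (UpperHalfPlane.coe_mem_integerComplement ⟨z, hz⟩)
  have h := iteratedDerivWithin_cot_pi_mul_eq_mul_tsum_div_pow le_rfl (z := z) hz
  rw [iteratedDerivWithin_one, derivWithin_of_isOpen UpperHalfPlane.isOpen_upperHalfPlaneSet hz,
    (hasDerivAt_pi_mul_cot_pi_mul hsin).deriv] at h
  simpa using h.symm

lemma hasSum_one_div_two_pi_mul_int_add_mul_I_sq {s : ℝ} (hs : 0 < s) :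
    HasSum (fun n : ℤ => 1 / (2 * π * n + s * I) ^ 2)
      ((-1 / (4 * Real.sinh (s / 2) ^ 2) : ℝ) : ℂ) := by
  set z : ℂ := (s / (2 * π) : ℝ) * I
  have hz : 0 < z.im := by
    rw [mul_I_im, ofReal_re]
    positivity
  have hsin : Complex.sin (π * z) = Real.sinh (s / 2) * I := by
    rw [← mul_assoc, ← ofReal_mul, show π * (s / (2 * π)) = s / 2 by field_simp,
      Complex.sin_mul_I, ofReal_sinh]
  have hsinh : Real.sinh (s / 2) ≠ 0 := (Real.sinh_pos_iff.mpr (by positivity)).ne'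
  have hterm (n : ℤ) : 1 / (2 * π * n + s * I) ^ 2 = 1 / (z + n) ^ 2 / (4 * π ^ 2) := by
    simp only [z]
    push_cast
    field_simp
    ring
  have hvalue : ((-1 / (4 * Real.sinh (s / 2) ^ 2) : ℝ) : ℂ)
      = π ^ 2 / Complex.sin (π * z) ^ 2 / (4 * π ^ 2) := by
    rw [hsin]
    push_cast
    field_simp
    rw [I_sq]
    ring
  rw [hvalue]
  exact ((hasSum_one_div_add_int_sq hz).div_const _).congr_fun hterm

lemma re_one_div_add_mul_I_sq (a b : ℝ) :
    (1 / ((a : ℂ) + b * I) ^ 2).re = (a ^ 2 - b ^ 2) / (a ^ 2 + b ^ 2) ^ 2 := by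
  rw [one_div, inv_re, map_pow, normSq_add_mul_I]
  simp [sq]

end

theorem stmt14 (x : ℝ) (hx : 0 < x) :
    Summable (fun n : ℤ => ((2 * π * (n : ℝ)) ^ 2 - x) / ((2 * π * (n : ℝ)) ^ 2 + x) ^ 2) ∧
    ∑' n : ℤ, ((2 * π * (n : ℝ)) ^ 2 - x) / ((2 * π * (n : ℝ)) ^ 2 + x) ^ 2
      = -1 / (4 * Real.sinh (Real.sqrt x / 2) ^ 2) := by
  have hsum := Complex.hasSum_re
    (hasSum_one_div_two_pi_mul_int_add_mul_I_sq (Real.sqrt_pos.mpr hx))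
  rw [Complex.ofReal_re] at hsum
  have hterm (n : ℤ) : ((2 * π * (n : ℝ)) ^ 2 - x) / ((2 * π * (n : ℝ)) ^ 2 + x) ^ 2
      = (1 / (2 * π * n + Real.sqrt x * Complex.I) ^ 2).re := by
    rw [show (2 * π * n : ℂ) = ((2 * π * n : ℝ) : ℂ) by push_cast; rfl,
      re_one_div_add_mul_I_sq, Real.sq_sqrt hx.le]
  have h := hsum.congr_fun hterm
  exact ⟨h.summable, h.tsum_eq⟩
end

section
/- For every real t > 0 one has Σ_{n∈ℤ} (2π·n²·t - 1) · exp(-π·n²·t) = -2π · t^{-3/2} · Σ_{n∈ℤ} n² · exp(-π·n²/t). (Equivalently, writing θ(t) = Σ_{n∈ℤ} e^{-πn²t}, one has -2t·θ′(t) - θ(t) = 2·t^{-3/2}·θ′(1/t).) -/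
/-!
Write `θ(s) = ∑ₙ exp(-π n² s)`. Poisson summation gives `√s θ(s) = θ(1/s)`
(`Real.tsum_exp_neg_mul_int_sq`); differentiating both sides, with `θ'(s) = -π ∑ₙ n² exp(-π n² s)`
by termwise differentiation, and multiplying by `2√s` gives the identity.
-/

open Real Set

theorem summable_abs_pow_mul_exp_neg_pi_sq_mul (k : ℕ) {c : ℝ} (hc : 0 < c) :
    Summable fun n : ℤ => |(n : ℝ)| ^ k * exp (-π * (n : ℝ) ^ 2 * c) := by
  simpa only [Int.cast_abs, mul_zero, zero_mul, sub_zero, mul_comm c, mul_assoc]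
    using summable_pow_mul_jacobiTheta₂_term_bound 0 hc k

theorem summable_sq_mul_exp_neg_pi_sq_mul {c : ℝ} (hc : 0 < c) :
    Summable fun n : ℤ => (n : ℝ) ^ 2 * exp (-π * (n : ℝ) ^ 2 * c) := by
  simpa only [sq_abs] using summable_abs_pow_mul_exp_neg_pi_sq_mul 2 hc

theorem summable_exp_neg_pi_sq_mul {c : ℝ} (hc : 0 < c) :
    Summable fun n : ℤ => exp (-π * (n : ℝ) ^ 2 * c) := by
  simpa only [pow_zero, one_mul] using summable_abs_pow_mul_exp_neg_pi_sq_mul 0 hc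

/-- `jacobiTheta` on the imaginary axis: `realTheta s = jacobiTheta (s * I)`. -/
noncomputable def realTheta (s : ℝ) : ℝ := ∑' n : ℤ, exp (-π * (n : ℝ) ^ 2 * s)

theorem hasDerivAt_realTheta {s : ℝ} (hs : 0 < s) :
    HasDerivAt realTheta (-π * ∑' n : ℤ, (n : ℝ) ^ 2 * exp (-π * (n : ℝ) ^ 2 * s)) s := by
  have hs2 : 0 < s / 2 := half_pos hs
  have hmem : s ∈ Ioi (s / 2) := half_lt_self hs
  have key := hasDerivAt_tsum_of_isPreconnected
    (g := fun (n : ℤ) (y : ℝ) => exp (-π * (n : ℝ) ^ 2 * y))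
    (g' := fun (n : ℤ) (y : ℝ) => -π * ((n : ℝ) ^ 2 * exp (-π * (n : ℝ) ^ 2 * y)))
    ((summable_sq_mul_exp_neg_pi_sq_mul hs2).mul_left π) isOpen_Ioi isPreconnected_Ioi
    (fun n y _ => ?deriv) (fun n y hy => ?bound) hmem (summable_exp_neg_pi_sq_mul hs) hmem
  · rwa [tsum_mul_left] at key
  case deriv =>
    exact (((hasDerivAt_id' y).const_mul _).exp).congr_deriv (by ring)
  case bound =>
    rw [norm_mul, norm_neg, norm_of_nonneg pi_pos.le, norm_of_nonneg (by positivity)]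
    gcongr _ * (_ * ?_)
    exact exp_le_exp.mpr <| mul_le_mul_of_nonpos_left (mem_Ioi.mp hy).le
      (by nlinarith [pi_pos, sq_nonneg (n : ℝ)])

theorem sqrt_mul_realTheta {s : ℝ} (hs : 0 < s) : √s * realTheta s = realTheta s⁻¹ := by
  have h := tsum_exp_neg_mul_int_sq hs
  rw [← sqrt_eq_rpow] at h
  simp only [realTheta, mul_right_comm _ _ s, h, ← mul_assoc,
    mul_one_div_cancel (sqrt_pos.mpr hs).ne', one_mul]
  exact tsum_congr fun n => by ring_nf

theorem rpow_neg_three_halves {s : ℝ} (hs : 0 < s) : s ^ (-(3 : ℝ) / 2) = √s / s ^ 2 := by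
  rw [show -(3 : ℝ) / 2 = 1 / 2 - 2 by norm_num, rpow_sub hs, rpow_two, sqrt_eq_rpow]

theorem realTheta_sub_two_pi_mul_tsum_eq {s : ℝ} (hs : 0 < s) :
    realTheta s - 2 * π * s * ∑' n : ℤ, (n : ℝ) ^ 2 * exp (-π * (n : ℝ) ^ 2 * s)
      = 2 * π * s ^ (-(3 : ℝ) / 2) * ∑' n : ℤ, (n : ℝ) ^ 2 * exp (-π * (n : ℝ) ^ 2 * s⁻¹) := by
  have hleft := (hasDerivAt_sqrt hs.ne').mul (hasDerivAt_realTheta hs)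
  have hright := (hasDerivAt_realTheta (inv_pos.mpr hs)).comp s (hasDerivAt_inv hs.ne')
  have hfun : (fun x => √x * realTheta x) =ᶠ[nhds s] realTheta ∘ (·⁻¹) :=
    Filter.eventually_of_mem (Ioi_mem_nhds hs) fun x hx => sqrt_mul_realTheta hx
  have key := (hleft.congr_of_eventuallyEq hfun.symm).unique hright
  set D := ∑' n : ℤ, (n : ℝ) ^ 2 * exp (-π * (n : ℝ) ^ 2 * s)
  set E := ∑' n : ℤ, (n : ℝ) ^ 2 * exp (-π * (n : ℝ) ^ 2 * s⁻¹)
  rw [rpow_neg_three_halves hs]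
  have hsq := sq_sqrt hs.le
  field_simp at key ⊢
  linear_combination key + 2 * π * D * s ^ 2 * hsq

theorem stmt15 (t : ℝ) (ht : 0 < t) :
    ∑' n : ℤ, (2 * π * (n : ℝ) ^ 2 * t - 1) * Real.exp (-π * (n : ℝ) ^ 2 * t)
      = -2 * π * t ^ (-(3:ℝ)/2) * ∑' n : ℤ, (n : ℝ) ^ 2 * Real.exp (-π * (n : ℝ) ^ 2 / t) := by
  have hsplit : ∑' n : ℤ, (2 * π * (n : ℝ) ^ 2 * t - 1) * exp (-π * (n : ℝ) ^ 2 * t)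
      = 2 * π * t * ∑' n : ℤ, (n : ℝ) ^ 2 * exp (-π * (n : ℝ) ^ 2 * t) - realTheta t := by
    rw [realTheta, ← tsum_mul_left, ← ((summable_sq_mul_exp_neg_pi_sq_mul ht).mul_left _).tsum_sub
      (summable_exp_neg_pi_sq_mul ht)]
    exact tsum_congr fun n => by ring
  have hdiv : ∑' n : ℤ, (n : ℝ) ^ 2 * exp (-π * (n : ℝ) ^ 2 / t)
      = ∑' n : ℤ, (n : ℝ) ^ 2 * exp (-π * (n : ℝ) ^ 2 * t⁻¹) :=
    tsum_congr fun n => by rw [div_eq_mul_inv]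
  rw [hsplit, hdiv]
  linear_combination -realTheta_sub_two_pi_mul_tsum_eq ht
end
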